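/- arXiv:1611.09548 — 7 statements merged into one kernel-verified Lean document; each statement's English description precedes it below -/
import Mathlib

section
/- Let ψ : [1,∞) → ℝ be smooth, increasing, with ψ(s) ≥ 1 for all s ≥ 1, such that for every integer k ≥ 1 there is C_k > 0 with |ψ^{(k)}(s)| ≤ C_k s^{−k} ψ(s) for all s ≥ 1, and assume additionally that ψ(s)/s → 0 as s → ∞. Fix λ > 0 and a multi-index γ ∈ ℕ^n with |γ| ≥ 1, and define χ_γ(ξ) = (1/γ!) · e^{−λψ(⟨ξ⟩)} · (∂_ν^γ e^{λψ(⟨ν⟩)})|_{ν=ξ}. Then χ_γ is a symbol of order zero: for every multi-index α ∈ ℕ^n there exists C_α > 0 such that |∂_ξ^α χ_γ(ξ)| ≤ C_α ⟨ξ⟩^{−|α|} for all ξ ∈ ℝ^n. -/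
noncomputable section

open Real Set Filter MeasureTheory

/-- Japanese bracket `⟨ξ⟩ = (1 + |ξ|²)^(1/2)`. -/
def jb {n : ℕ} (ξ : EuclideanSpace ℝ (Fin n)) : ℝ := Real.sqrt (1 + ‖ξ‖ ^ 2)

/-- Partial derivative in the `i`-th coordinate direction. -/
def pd {n : ℕ} (i : Fin n) (f : EuclideanSpace ℝ (Fin n) → ℝ) :
    EuclideanSpace ℝ (Fin n) → ℝ :=
  fun x => fderiv ℝ f x (EuclideanSpace.single i 1)

/-- Iterated partial derivative `∂^α` for a multi-index `α : Fin n → ℕ`. -/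
def md {n : ℕ} (α : Fin n → ℕ) (f : EuclideanSpace ℝ (Fin n) → ℝ) :
    EuclideanSpace ℝ (Fin n) → ℝ :=
  (List.finRange n).foldr (fun i g => (pd i)^[α i] g) f

-- basic jb lemmas
lemma one_le_jb {n : ℕ} (ξ : EuclideanSpace ℝ (Fin n)) : 1 ≤ jb ξ := by
  have h : (1:ℝ) ≤ 1 + ‖ξ‖ ^ 2 := by nlinarith [sq_nonneg ‖ξ‖]
  have := Real.sqrt_le_sqrt h
  simpa [jb] using this

lemma jb_pos {n : ℕ} (ξ : EuclideanSpace ℝ (Fin n)) : 0 < jb ξ :=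
  lt_of_lt_of_le one_pos (one_le_jb ξ)

lemma jb_ne {n : ℕ} (ξ : EuclideanSpace ℝ (Fin n)) : jb ξ ≠ 0 := (jb_pos ξ).ne'

lemma abs_coord_le {n : ℕ} (ξ : EuclideanSpace ℝ (Fin n)) (i : Fin n) : |ξ i| ≤ jb ξ := by
  have h2 : |ξ i| ^ 2 ≤ 1 + ‖ξ‖ ^ 2 := by
    have h3 : ‖ξ‖ ^ 2 = ∑ j, ‖ξ j‖ ^ 2 := by
      rw [EuclideanSpace.norm_eq, Real.sq_sqrt (by positivity)]
    have h4 : |ξ i| ^ 2 ≤ ∑ j, ‖ξ j‖ ^ 2 := by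
      calc |ξ i| ^ 2 = ‖ξ i‖ ^ 2 := by rw [Real.norm_eq_abs]
        _ ≤ ∑ j, ‖ξ j‖ ^ 2 := Finset.single_le_sum (f := fun j => ‖ξ j‖ ^ 2)
            (fun j _ => by positivity) (Finset.mem_univ i)
    linarith
  calc |ξ i| = Real.sqrt (|ξ i| ^ 2) := by rw [Real.sqrt_sq_eq_abs, abs_abs]
    _ ≤ Real.sqrt (1 + ‖ξ‖ ^ 2) := Real.sqrt_le_sqrt h2
    _ = jb ξ := rfl

lemma inner_single_one {n : ℕ} (ξ : EuclideanSpace ℝ (Fin n)) (i : Fin n) :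
    (innerSL ℝ ξ) (EuclideanSpace.single i (1:ℝ)) = ξ i := by
  simp [EuclideanSpace.inner_single_right]

lemma hasFDerivAt_jb {n : ℕ} (ξ : EuclideanSpace ℝ (Fin n)) :
    HasFDerivAt jb ((jb ξ)⁻¹ • (innerSL ℝ ξ)) ξ := by
  have h1 : HasFDerivAt (fun x : EuclideanSpace ℝ (Fin n) => 1 + ‖x‖ ^ 2)
      (2 • innerSL ℝ ξ) ξ := by
    have := (hasFDerivAt_id ξ).norm_sq
    simpa using this.const_add 1
  have hne : (1 : ℝ) + ‖ξ‖ ^ 2 ≠ 0 := by positivity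
  have h2 : HasDerivAt Real.sqrt (1 / (2 * Real.sqrt (1 + ‖ξ‖ ^ 2))) (1 + ‖ξ‖ ^ 2) :=
    Real.hasDerivAt_sqrt hne
  have h3 := h2.comp_hasFDerivAt ξ h1
  have heq : (1 / (2 * Real.sqrt (1 + ‖ξ‖ ^ 2))) • (2 • innerSL ℝ ξ)
      = (jb ξ)⁻¹ • (innerSL ℝ ξ) := by
    ext v
    have hjb : Real.sqrt (1 + ‖ξ‖ ^ 2) ≠ 0 := jb_ne ξ
    simp only [ContinuousLinearMap.smul_apply, smul_eq_mul, nsmul_eq_mul,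
      ContinuousLinearMap.coe_smul', Pi.smul_apply, jb]
    field_simp
    ring
  rw [heq] at h3
  exact h3

lemma pd_apply_of_hasFDerivAt {n : ℕ} {f : EuclideanSpace ℝ (Fin n) → ℝ}
    {D : EuclideanSpace ℝ (Fin n) →L[ℝ] ℝ} {ξ : EuclideanSpace ℝ (Fin n)} (i : Fin n)
    (h : HasFDerivAt f D ξ) : pd i f ξ = D (EuclideanSpace.single i 1) := by
  rw [pd, h.fderiv]

-- Atom algebra
inductive SAtom (n : ℕ) : Type where
  | const (c : ℝ)
  | coord (j : Fin n)
  | psid (k : ℕ)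
  | jbinv
  | expg
  deriving DecidableEq

def SAtom.val {n : ℕ} (ψ : ℝ → ℝ) (lam : ℝ) : SAtom n → EuclideanSpace ℝ (Fin n) → ℝ
  | .const c => fun _ => c
  | .coord j => fun ξ => ξ j
  | .psid k => fun ξ => iteratedDeriv k ψ (jb ξ)
  | .jbinv => fun ξ => (jb ξ)⁻¹
  | .expg => fun ξ => Real.exp (lam * ψ (jb ξ))

def tval {n : ℕ} (ψ : ℝ → ℝ) (lam : ℝ) (t : List (SAtom n))
    (ξ : EuclideanSpace ℝ (Fin n)) : ℝ :=
  (t.map (fun a => a.val ψ lam ξ)).prod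

def rval {n : ℕ} (ψ : ℝ → ℝ) (lam : ℝ) (R : List (List (SAtom n)))
    (ξ : EuclideanSpace ℝ (Fin n)) : ℝ :=
  (R.map (fun t => tval ψ lam t ξ)).sum

def aexp {n : ℕ} (lam : ℝ) (i : Fin n) : SAtom n → List (List (SAtom n))
  | .const _ => []
  | .coord j => [[.const (if j = i then 1 else 0)]]
  | .psid k => [[.psid (k+1), .coord i, .jbinv]]
  | .jbinv => [[.const (-1), .coord i, .jbinv, .jbinv, .jbinv]]
  | .expg => [[.expg, .const lam, .psid 1, .coord i, .jbinv]]

def texp {n : ℕ} (lam : ℝ) (i : Fin n) : List (SAtom n) → List (List (SAtom n))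
  | [] => []
  | a :: t => ((aexp lam i a).map (· ++ t)) ++ ((texp lam i t).map (a :: ·))

def rdx {n : ℕ} (lam : ℝ) (i : Fin n) (R : List (List (SAtom n))) : List (List (SAtom n)) :=
  (R.map (texp lam i)).flatten

lemma tval_nil {n : ℕ} (ψ : ℝ → ℝ) (lam : ℝ) (ξ : EuclideanSpace ℝ (Fin n)) :
    tval ψ lam [] ξ = 1 := rfl

lemma tval_cons {n : ℕ} (ψ : ℝ → ℝ) (lam : ℝ) (a : SAtom n) (t : List (SAtom n)) ξ :
    tval ψ lam (a :: t) ξ = a.val ψ lam ξ * tval ψ lam t ξ := by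
  simp [tval]

lemma tval_append {n : ℕ} (ψ : ℝ → ℝ) (lam : ℝ) (t₁ t₂ : List (SAtom n)) ξ :
    tval ψ lam (t₁ ++ t₂) ξ = tval ψ lam t₁ ξ * tval ψ lam t₂ ξ := by
  simp [tval]

lemma rval_nil {n : ℕ} (ψ : ℝ → ℝ) (lam : ℝ) (ξ : EuclideanSpace ℝ (Fin n)) :
    rval ψ lam [] ξ = 0 := rfl

lemma rval_cons {n : ℕ} (ψ : ℝ → ℝ) (lam : ℝ) (t : List (SAtom n)) R ξ :
    rval ψ lam (t :: R) ξ = tval ψ lam t ξ + rval ψ lam R ξ := by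
  simp [rval]

lemma rval_append {n : ℕ} (ψ : ℝ → ℝ) (lam : ℝ) (R₁ R₂ : List (List (SAtom n))) ξ :
    rval ψ lam (R₁ ++ R₂) ξ = rval ψ lam R₁ ξ + rval ψ lam R₂ ξ := by
  simp [rval]

lemma rval_map_append {n : ℕ} (ψ : ℝ → ℝ) (lam : ℝ) (R : List (List (SAtom n))) (t) (ξ) :
    rval ψ lam (R.map (· ++ t)) ξ = rval ψ lam R ξ * tval ψ lam t ξ := by
  induction R with
  | nil => simp [rval]
  | cons t₁ R ih => simp only [List.map_cons, rval_cons, ih, tval_append]; ring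

lemma rval_map_cons {n : ℕ} (ψ : ℝ → ℝ) (lam : ℝ) (a : SAtom n) (R) (ξ) :
    rval ψ lam (R.map (a :: ·)) ξ = a.val ψ lam ξ * rval ψ lam R ξ := by
  induction R with
  | nil => simp [rval]
  | cons t R ih => simp only [List.map_cons, rval_cons, ih, tval_cons]; ring

-- pd calculus
lemma pd_mul {n : ℕ} {f g : EuclideanSpace ℝ (Fin n) → ℝ} (i : Fin n)
    (hf : Differentiable ℝ f) (hg : Differentiable ℝ g) :
    pd i (fun x => f x * g x) = fun x => pd i f x * g x + f x * pd i g x := by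
  funext x
  simp only [pd, fderiv_fun_mul (hf x) (hg x), ContinuousLinearMap.add_apply,
    ContinuousLinearMap.smul_apply, smul_eq_mul]
  ring

lemma pd_add {n : ℕ} {f g : EuclideanSpace ℝ (Fin n) → ℝ} (i : Fin n)
    (hf : Differentiable ℝ f) (hg : Differentiable ℝ g) :
    pd i (fun x => f x + g x) = fun x => pd i f x + pd i g x := by
  funext x
  simp only [pd, fderiv_fun_add (hf x) (hg x), ContinuousLinearMap.add_apply]

lemma pd_const {n : ℕ} (i : Fin n) (c : ℝ) :
    pd i (fun _ : EuclideanSpace ℝ (Fin n) => c) = fun _ => 0 := by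
  funext x
  simp [pd]

section withPsi

variable {n : ℕ} {ψ : ℝ → ℝ} {lam : ℝ} (hψ : ContDiff ℝ (⊤ : ℕ∞) ψ)

include hψ

lemma diff_iteratedDeriv (k : ℕ) : Differentiable ℝ (iteratedDeriv k ψ) := by
  rw [iteratedDeriv_eq_iterate]
  exact (hψ.iterate_deriv k).differentiable (by simp)

lemma hasDerivAt_iteratedDeriv (k : ℕ) (s : ℝ) :
    HasDerivAt (iteratedDeriv k ψ) (iteratedDeriv (k+1) ψ s) s := by
  have h := (diff_iteratedDeriv hψ (k := k) s).hasDerivAt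
  rwa [show deriv (iteratedDeriv k ψ) s = iteratedDeriv (k+1) ψ s by
    rw [iteratedDeriv_succ]] at h

set_option maxHeartbeats 1000000 in
lemma atom_deriv (i : Fin n) (a : SAtom n) :
    Differentiable ℝ (a.val ψ lam) ∧ pd i (a.val ψ lam) = rval ψ lam (aexp lam i a) := by
  cases a with
  | const c =>
      constructor
      · exact differentiable_const c
      · funext ξ; simp [SAtom.val, pd, rval, aexp]
  | coord j =>
      have h : ∀ ξ : EuclideanSpace ℝ (Fin n),
          HasFDerivAt (SAtom.val ψ lam (.coord j)) (EuclideanSpace.proj (𝕜 := ℝ) j) ξ := by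
        intro ξ
        have h0 := (EuclideanSpace.proj (𝕜 := ℝ) (ι := Fin n) j).hasFDerivAt (x := ξ)
        have heq : (⇑(EuclideanSpace.proj (𝕜 := ℝ) (ι := Fin n) j) :
            EuclideanSpace ℝ (Fin n) → ℝ) = SAtom.val ψ lam (.coord j) := rfl
        rwa [heq] at h0
      constructor
      · exact fun ξ => (h ξ).differentiableAt
      · funext ξ
        rw [pd_apply_of_hasFDerivAt i (h ξ)]
        simp [rval, tval, SAtom.val, aexp, PiLp.proj_apply,
          EuclideanSpace.single_apply]
  | psid k =>
      have h : ∀ ξ : EuclideanSpace ℝ (Fin n),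
          HasFDerivAt (SAtom.val ψ lam (.psid k))
            (iteratedDeriv (k+1) ψ (jb ξ) • ((jb ξ)⁻¹ • innerSL ℝ ξ)) ξ := fun ξ =>
        (hasDerivAt_iteratedDeriv hψ k (jb ξ)).comp_hasFDerivAt ξ (hasFDerivAt_jb ξ)
      constructor
      · exact fun ξ => (h ξ).differentiableAt
      · funext ξ
        rw [pd_apply_of_hasFDerivAt i (h ξ)]
        simp only [ContinuousLinearMap.smul_apply, inner_single_one, smul_eq_mul,
          rval, tval, aexp, List.map_cons, List.map_nil, List.prod_cons, List.prod_nil,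
          List.sum_cons, List.sum_nil, SAtom.val]
        ring
  | jbinv =>
      have h : ∀ ξ : EuclideanSpace ℝ (Fin n),
          HasFDerivAt (SAtom.val ψ lam (.jbinv))
            ((-(jb ξ ^ 2)⁻¹) • ((jb ξ)⁻¹ • innerSL ℝ ξ)) ξ := fun ξ =>
        (hasDerivAt_inv (jb_ne ξ)).comp_hasFDerivAt ξ (hasFDerivAt_jb ξ)
      constructor
      · exact fun ξ => (h ξ).differentiableAt
      · funext ξ
        rw [pd_apply_of_hasFDerivAt i (h ξ)]
        simp only [ContinuousLinearMap.smul_apply, inner_single_one, smul_eq_mul,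
          rval, tval, aexp, List.map_cons, List.map_nil, List.prod_cons, List.prod_nil,
          List.sum_cons, List.sum_nil, SAtom.val]
        rw [sq, mul_inv]
        ring
  | expg =>
      have h : ∀ ξ : EuclideanSpace ℝ (Fin n),
          HasFDerivAt (SAtom.val ψ lam (.expg))
            (Real.exp (lam * ψ (jb ξ)) •
              (lam • (deriv ψ (jb ξ) • ((jb ξ)⁻¹ • innerSL ℝ ξ)))) ξ := by
        intro ξ
        have h1 : HasFDerivAt (fun x : EuclideanSpace ℝ (Fin n) => ψ (jb x))
            (deriv ψ (jb ξ) • ((jb ξ)⁻¹ • innerSL ℝ ξ)) ξ :=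
          ((hψ.differentiable (by simp) (jb ξ)).hasDerivAt).comp_hasFDerivAt ξ (hasFDerivAt_jb ξ)
        have h2 : HasFDerivAt (fun x : EuclideanSpace ℝ (Fin n) => lam * ψ (jb x))
            (lam • (deriv ψ (jb ξ) • ((jb ξ)⁻¹ • innerSL ℝ ξ))) ξ := h1.const_mul lam
        exact (Real.hasDerivAt_exp (lam * ψ (jb ξ))).comp_hasFDerivAt ξ h2
      constructor
      · exact fun ξ => (h ξ).differentiableAt
      · funext ξ
        rw [pd_apply_of_hasFDerivAt i (h ξ)]
        simp only [ContinuousLinearMap.smul_apply, inner_single_one, smul_eq_mul,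
          rval, tval, aexp, List.map_cons, List.map_nil, List.prod_cons, List.prod_nil,
          List.sum_cons, List.sum_nil, SAtom.val, iteratedDeriv_one]
        ring

lemma term_deriv (i : Fin n) (t : List (SAtom n)) :
    Differentiable ℝ (tval ψ lam t) ∧ pd i (tval ψ lam t) = rval ψ lam (texp lam i t) := by
  induction t with
  | nil =>
      constructor
      · exact differentiable_const 1
      · have heq : tval ψ lam ([] : List (SAtom n)) = fun _ => (1:ℝ) := rfl
        rw [heq, pd_const]
        funext ξ; simp [texp, rval]
  | cons a t ih =>
      have ha := atom_deriv hψ (lam := lam) i a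
      have heq : tval ψ lam (a :: t) = fun ξ => a.val ψ lam ξ * tval ψ lam t ξ := by
        funext ξ; exact tval_cons ψ lam a t ξ
      constructor
      · rw [heq]; exact ha.1.mul ih.1
      · rw [heq, pd_mul i ha.1 ih.1]
        funext ξ
        simp only [texp, rval_append, rval_map_append, rval_map_cons, ha.2, ih.2]

lemma rep_deriv (i : Fin n) (R : List (List (SAtom n))) :
    Differentiable ℝ (rval ψ lam R) ∧ pd i (rval ψ lam R) = rval ψ lam (rdx lam i R) := by
  induction R with
  | nil =>
      constructor
      · exact differentiable_const 0
      · have heq : rval ψ lam ([] : List (List (SAtom n))) = fun _ => (0:ℝ) := rfl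
        rw [heq, pd_const]
        funext ξ; simp [rdx, rval]
  | cons t R ih =>
      have ht := term_deriv hψ (lam := lam) i t
      have heq : rval ψ lam (t :: R) = fun ξ => tval ψ lam t ξ + rval ψ lam R ξ := by
        funext ξ; exact rval_cons ψ lam t R ξ
      have hx : rdx lam i (t :: R) = texp lam i t ++ rdx lam i R := by
        simp [rdx]
      constructor
      · rw [heq]; exact ht.1.add ih.1
      · rw [heq, pd_add i ht.1 ih.1, hx]
        funext ξ
        simp only [rval_append, ht.2, ih.2]

lemma foldr_pd (L : List (Fin n)) (R : List (List (SAtom n))) :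
    L.foldr pd (rval ψ lam R) = rval ψ lam (L.foldr (rdx lam) R) := by
  induction L with
  | nil => rfl
  | cons i L ih =>
      simp only [List.foldr_cons, ih, (rep_deriv hψ i _).2]

end withPsi

-- md as a foldr over a flat list
def mlist {n : ℕ} (β : Fin n → ℕ) : List (Fin n) :=
  (List.finRange n).flatMap (fun i => List.replicate (β i) i)

lemma replicate_foldr_pd {n : ℕ} (k : ℕ) (i : Fin n) (f : EuclideanSpace ℝ (Fin n) → ℝ) :
    (List.replicate k i).foldr pd f = (pd i)^[k] f := by
  induction k with
  | zero => rfl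
  | succ k ih => rw [List.replicate_succ, List.foldr_cons, ih, Function.iterate_succ_apply']

lemma md_eq_foldr {n : ℕ} (β : Fin n → ℕ) (f : EuclideanSpace ℝ (Fin n) → ℝ) :
    md β f = (mlist β).foldr pd f := by
  rw [md, mlist]
  induction (List.finRange n) with
  | nil => rfl
  | cons i l ih =>
      rw [List.flatMap_cons, List.foldr_append, List.foldr_cons, ih, replicate_foldr_pd]

lemma mlist_length {n : ℕ} (β : Fin n → ℕ) : (mlist β).length = ∑ i, β i := by
  rw [mlist, List.length_flatMap, Fin.sum_univ_def]
  congr 1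
  apply List.map_congr_left
  intro j _
  simp

-- invariants
def awt {n : ℕ} : SAtom n → ℤ
  | .const _ => 0
  | .coord _ => 1
  | .psid k => -(k : ℤ)
  | .jbinv => -1
  | .expg => 0

def anp {n : ℕ} : SAtom n → ℕ
  | .psid _ => 1
  | _ => 0

def ane {n : ℕ} : SAtom n → ℕ
  | .expg => 1
  | _ => 0

def okA {n : ℕ} : SAtom n → Prop
  | .psid k => 1 ≤ k
  | _ => True

def twt {n : ℕ} (t : List (SAtom n)) : ℤ := (t.map awt).sum
def tnp {n : ℕ} (t : List (SAtom n)) : ℕ := (t.map anp).sum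
def tne {n : ℕ} (t : List (SAtom n)) : ℕ := (t.map ane).sum
def okT {n : ℕ} (t : List (SAtom n)) : Prop := ∀ a ∈ t, okA a

lemma twt_cons {n : ℕ} (a : SAtom n) (t) : twt (a :: t) = awt a + twt t := by simp [twt]
lemma tnp_cons {n : ℕ} (a : SAtom n) (t) : tnp (a :: t) = anp a + tnp t := by simp [tnp]
lemma tne_cons {n : ℕ} (a : SAtom n) (t) : tne (a :: t) = ane a + tne t := by simp [tne]
lemma twt_append {n : ℕ} (t₁ t₂ : List (SAtom n)) : twt (t₁ ++ t₂) = twt t₁ + twt t₂ := by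
  simp [twt]
lemma tnp_append {n : ℕ} (t₁ t₂ : List (SAtom n)) : tnp (t₁ ++ t₂) = tnp t₁ + tnp t₂ := by
  simp [tnp]
lemma tne_append {n : ℕ} (t₁ t₂ : List (SAtom n)) : tne (t₁ ++ t₂) = tne t₁ + tne t₂ := by
  simp [tne]

lemma aexp_invariant {n : ℕ} (lam : ℝ) (i : Fin n) (a : SAtom n) (h : okA a) :
    ∀ t₁ ∈ aexp lam i a,
      okT t₁ ∧ tne t₁ = ane a ∧ tnp t₁ ≤ anp a + ane a ∧ twt t₁ = awt a - 1 := by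
  cases a with
  | const c => intro t₁ ht₁; simp [aexp] at ht₁
  | coord j =>
      intro t₁ ht₁
      simp only [aexp, List.mem_singleton] at ht₁
      subst ht₁
      refine ⟨?_, ?_, ?_, ?_⟩
      · intro b hb; fin_cases hb; trivial
      · simp [tne, ane]
      · simp [tnp, anp]
      · simp [twt, awt]
  | psid k =>
      intro t₁ ht₁
      simp only [aexp, List.mem_singleton] at ht₁
      subst ht₁
      refine ⟨?_, ?_, ?_, ?_⟩
      · intro b hb; fin_cases hb
        · simp [okA]
        · trivial
        · trivial
      · simp [tne, ane]
      · simp [tnp, anp]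
      · simp [twt, awt]; ring
  | jbinv =>
      intro t₁ ht₁
      simp only [aexp, List.mem_singleton] at ht₁
      subst ht₁
      refine ⟨?_, ?_, ?_, ?_⟩
      · intro b hb; fin_cases hb <;> trivial
      · simp [tne, ane]
      · simp [tnp, anp]
      · simp [twt, awt]
  | expg =>
      intro t₁ ht₁
      simp only [aexp, List.mem_singleton] at ht₁
      subst ht₁
      refine ⟨?_, ?_, ?_, ?_⟩
      · intro b hb; fin_cases hb
        · trivial
        · trivial
        · simp [okA]
        · trivial
        · trivial
      · simp [tne, ane]
      · simp [tnp, anp, ane]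
      · simp [twt, awt]

lemma texp_invariant {n : ℕ} (lam : ℝ) (i : Fin n) (t : List (SAtom n)) (h : okT t) :
    ∀ t' ∈ texp lam i t,
      okT t' ∧ tne t' = tne t ∧ tnp t' ≤ tnp t + tne t ∧ twt t' = twt t - 1 := by
  induction t with
  | nil => intro t' ht'; simp [texp] at ht'
  | cons a t ih =>
      have hat : okT t := fun b hb => h b (List.mem_cons_of_mem a hb)
      have haa : okA a := h a (List.mem_cons_self)
      intro t' ht'
      rw [texp, List.mem_append] at ht'
      rcases ht' with ht' | ht'
      · obtain ⟨t₁, ht₁, rfl⟩ := List.mem_map.1 ht'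
        obtain ⟨h1, h2, h3, h4⟩ := aexp_invariant lam i a haa t₁ ht₁
        refine ⟨?_, ?_, ?_, ?_⟩
        · intro b hb
          rcases List.mem_append.1 hb with hb | hb
          · exact h1 b hb
          · exact hat b hb
        · rw [tne_append, tne_cons]; omega
        · rw [tnp_append, tnp_cons, tne_cons]; omega
        · rw [twt_append, twt_cons]; omega
      · obtain ⟨t₁, ht₁, rfl⟩ := List.mem_map.1 ht'
        obtain ⟨h1, h2, h3, h4⟩ := ih hat t₁ ht₁
        refine ⟨?_, ?_, ?_, ?_⟩
        · intro b hb
          rcases List.mem_cons.1 hb with rfl | hb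
          · exact haa
          · exact h1 b hb
        · rw [tne_cons, tne_cons]; omega
        · rw [tnp_cons, tnp_cons, tne_cons]; omega
        · rw [twt_cons, twt_cons]; omega

def GoodR {n : ℕ} (e m : ℕ) (W : ℤ) (R : List (List (SAtom n))) : Prop :=
  ∀ t ∈ R, okT t ∧ tne t = e ∧ tnp t ≤ m ∧ twt t ≤ W

lemma GoodR_mono {n : ℕ} {e m m' : ℕ} {W W' : ℤ} {R : List (List (SAtom n))}
    (h : GoodR e m W R) (hm : m ≤ m') (hW : W ≤ W') : GoodR e m' W' R := by
  intro t ht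
  obtain ⟨h1, h2, h3, h4⟩ := h t ht
  exact ⟨h1, h2, h3.trans hm, h4.trans hW⟩

lemma good_rdx {n : ℕ} {lam : ℝ} {e m : ℕ} {W : ℤ} {R : List (List (SAtom n))} (i : Fin n)
    (h : GoodR e m W R) : GoodR e (m + e) (W - 1) (rdx lam i R) := by
  intro t' ht'
  rw [rdx] at ht'
  obtain ⟨l, hl, ht'⟩ := List.mem_flatten.1 ht'
  obtain ⟨t, ht, rfl⟩ := List.mem_map.1 hl
  obtain ⟨h1, h2, h3, h4⟩ := h t ht
  obtain ⟨g1, g2, g3, g4⟩ := texp_invariant lam i t h1 t' ht'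
  exact ⟨g1, by omega, by omega, by omega⟩

lemma good_foldr {n : ℕ} {lam : ℝ} {e m : ℕ} {W : ℤ} {R : List (List (SAtom n))}
    (L : List (Fin n)) (h : GoodR e m W R) :
    GoodR e (m + L.length * e) (W - L.length) (L.foldr (rdx lam) R) := by
  induction L with
  | nil => simpa using h
  | cons i L ih =>
      have h2 := good_rdx (lam := lam) i ih
      rw [List.foldr_cons]
      refine GoodR_mono h2 ?_ ?_
      · simp [List.length_cons]; ring_nf; omega
      · simp [List.length_cons]; ring_nf; omega

-- linear growth of psi
lemma exists_K {ψ : ℝ → ℝ} (hψcont : Continuous ψ)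
    (hψo : Filter.Tendsto (fun s => ψ s / s) Filter.atTop (nhds 0)) :
    ∃ K > 0, ∀ s : ℝ, 1 ≤ s → ψ s ≤ K * s := by
  have h1 : ∀ᶠ s in Filter.atTop, ψ s / s < 1 := hψo.eventually (gt_mem_nhds one_pos)
  obtain ⟨s₀, hs₀⟩ := Filter.eventually_atTop.1 h1
  set s₁ := max s₀ 1 with hs₁def
  obtain ⟨M, hM⟩ := (isCompact_Icc (a := (1:ℝ)) (b := s₁)).exists_bound_of_continuousOn
    hψcont.continuousOn
  refine ⟨max M 1, lt_of_lt_of_le one_pos (le_max_right M 1), fun s hs => ?_⟩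
  rcases le_or_gt s s₁ with h | h
  · have := hM s ⟨hs, h⟩
    calc ψ s ≤ |ψ s| := le_abs_self _
      _ ≤ M := by rwa [Real.norm_eq_abs] at this
      _ ≤ max M 1 := le_max_left M 1
      _ = max M 1 * 1 := (mul_one _).symm
      _ ≤ max M 1 * s := by
          have : (0:ℝ) < max M 1 := lt_of_lt_of_le one_pos (le_max_right M 1)
          nlinarith
  · have hs' : s₀ ≤ s := le_trans (le_max_left s₀ 1) h.le
    have h2 : ψ s / s < 1 := hs₀ s hs'
    have hspos : (0:ℝ) < s := lt_of_lt_of_le one_pos hs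
    have h3 : ψ s < s := by
      have := (div_lt_one hspos).1 h2
      exact this
    calc ψ s ≤ s := h3.le
      _ = 1 * s := (one_mul s).symm
      _ ≤ max M 1 * s := by
          have : (1:ℝ) ≤ max M 1 := le_max_right M 1
          nlinarith

-- derivative bounds including k = 0
lemma psid_bound {ψ : ℝ → ℝ}
    (hψge : ∀ s : ℝ, 1 ≤ s → 1 ≤ ψ s)
    (hψder : ∀ k : ℕ, 1 ≤ k → ∃ C > 0, ∀ s : ℝ, 1 ≤ s →
      |iteratedDeriv k ψ s| ≤ C * ψ s / s ^ k) (k : ℕ) :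
    ∃ C > 0, ∀ s : ℝ, 1 ≤ s → |iteratedDeriv k ψ s| ≤ C * ψ s / s ^ k := by
  rcases Nat.eq_zero_or_pos k with rfl | hk
  · refine ⟨1, one_pos, fun s hs => ?_⟩
    rw [iteratedDeriv_zero, pow_zero]
    have := hψge s hs
    rw [abs_of_nonneg (by linarith)]
    linarith
  · exact hψder k hk

-- bound for a single atom
lemma atom_bound {n : ℕ} {ψ : ℝ → ℝ} {lam : ℝ}
    (hψge : ∀ s : ℝ, 1 ≤ s → 1 ≤ ψ s)
    (hψder : ∀ k : ℕ, 1 ≤ k → ∃ C > 0, ∀ s : ℝ, 1 ≤ s →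
      |iteratedDeriv k ψ s| ≤ C * ψ s / s ^ k)
    (a : SAtom n) (hok : okA a) (hne : ane a = 0) :
    ∃ C > 0, ∀ ξ : EuclideanSpace ℝ (Fin n),
      |a.val ψ lam ξ| ≤ C * ψ (jb ξ) ^ (anp a) * (jb ξ) ^ (awt a) := by
  cases a with
  | const c =>
      refine ⟨|c| + 1, by positivity, fun ξ => ?_⟩
      simp [SAtom.val, anp, awt]
  | coord j =>
      refine ⟨1, one_pos, fun ξ => ?_⟩
      simp only [SAtom.val, anp, awt, pow_zero, one_mul, zpow_one]
      exact abs_coord_le ξ j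
  | psid k =>
      obtain ⟨C, hC, hbd⟩ := psid_bound hψge hψder k
      refine ⟨C, hC, fun ξ => ?_⟩
      have h1 := hbd (jb ξ) (one_le_jb ξ)
      have h2 : (jb ξ : ℝ) ^ (awt (SAtom.psid k : SAtom n)) = ((jb ξ) ^ k)⁻¹ := by
        simp only [awt]
        rw [zpow_neg, zpow_natCast]
      simp only [SAtom.val, anp, pow_one]
      rw [h2]
      calc |iteratedDeriv k ψ (jb ξ)| ≤ C * ψ (jb ξ) / (jb ξ) ^ k := h1
        _ = C * ψ (jb ξ) * ((jb ξ) ^ k)⁻¹ := by rw [div_eq_mul_inv]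
  | jbinv =>
      refine ⟨1, one_pos, fun ξ => ?_⟩
      simp only [SAtom.val, anp, awt, pow_zero, one_mul]
      rw [zpow_neg, zpow_one, abs_of_nonneg (inv_nonneg.mpr (jb_pos ξ).le)]
  | expg => simp [ane] at hne

-- bound for a term with no expg atom
lemma term_bound {n : ℕ} {ψ : ℝ → ℝ} {lam : ℝ}
    (hψge : ∀ s : ℝ, 1 ≤ s → 1 ≤ ψ s)
    (hψder : ∀ k : ℕ, 1 ≤ k → ∃ C > 0, ∀ s : ℝ, 1 ≤ s →
      |iteratedDeriv k ψ s| ≤ C * ψ s / s ^ k)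
    (t : List (SAtom n)) (hok : okT t) (hne : tne t = 0) :
    ∃ C > 0, ∀ ξ : EuclideanSpace ℝ (Fin n),
      |tval ψ lam t ξ| ≤ C * ψ (jb ξ) ^ (tnp t) * (jb ξ) ^ (twt t) := by
  induction t with
  | nil =>
      refine ⟨1, one_pos, fun ξ => ?_⟩
      simp [tval, tnp, twt]
  | cons a t ih =>
      have hat : okT t := fun b hb => hok b (List.mem_cons_of_mem a hb)
      have haa : okA a := hok a (List.mem_cons_self)
      have hane : ane a = 0 ∧ tne t = 0 := by
        rw [tne_cons] at hne; omega
      obtain ⟨C₁, hC₁, hb₁⟩ := atom_bound (lam := lam) hψge hψder a haa hane.1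
      obtain ⟨C₂, hC₂, hb₂⟩ := ih hat hane.2
      refine ⟨C₁ * C₂, by positivity, fun ξ => ?_⟩
      have hψpos : 0 < ψ (jb ξ) := lt_of_lt_of_le one_pos (hψge _ (one_le_jb ξ))
      have hjb : (0:ℝ) < jb ξ := jb_pos ξ
      rw [tval_cons, abs_mul, tnp_cons, twt_cons]
      calc |SAtom.val ψ lam a ξ| * |tval ψ lam t ξ|
          ≤ (C₁ * ψ (jb ξ) ^ (anp a) * (jb ξ) ^ (awt a)) *
            (C₂ * ψ (jb ξ) ^ (tnp t) * (jb ξ) ^ (twt t)) := by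
            apply mul_le_mul (hb₁ ξ) (hb₂ ξ) (abs_nonneg _)
            positivity
        _ = (C₁ * C₂) * ψ (jb ξ) ^ (anp a + tnp t) * (jb ξ) ^ (awt a + twt t) := by
            rw [pow_add, zpow_add₀ (jb_ne ξ)]
            ring

-- bound for a good representation
lemma rep_bound {n : ℕ} {ψ : ℝ → ℝ} {lam : ℝ}
    (hψge : ∀ s : ℝ, 1 ≤ s → 1 ≤ ψ s)
    (hψder : ∀ k : ℕ, 1 ≤ k → ∃ C > 0, ∀ s : ℝ, 1 ≤ s →
      |iteratedDeriv k ψ s| ≤ C * ψ s / s ^ k)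
    (hψcont : Continuous ψ)
    (hψo : Filter.Tendsto (fun s => ψ s / s) Filter.atTop (nhds 0))
    (G A : ℕ) (R : List (List (SAtom n))) (hGood : GoodR 0 G (-(G + A : ℤ)) R) :
    ∃ C > 0, ∀ ξ : EuclideanSpace ℝ (Fin n), |rval ψ lam R ξ| ≤ C / (jb ξ) ^ A := by
  obtain ⟨K, hK, hKb⟩ := exists_K hψcont hψo
  induction R with
  | nil =>
      refine ⟨1, one_pos, fun ξ => ?_⟩
      rw [rval_nil, abs_zero]
      have := jb_pos ξ
      positivity
  | cons t R ih =>
      obtain ⟨h1, h2, h3, h4⟩ := hGood t (List.mem_cons_self)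
      obtain ⟨C₂, hC₂, hb₂⟩ := ih (fun t' ht' => hGood t' (List.mem_cons_of_mem t ht'))
      obtain ⟨C₁, hC₁, hb₁⟩ := term_bound (lam := lam) hψge hψder t h1 h2
      refine ⟨C₁ * K ^ (tnp t) + C₂, by positivity, fun ξ => ?_⟩
      have hjb1 : (1:ℝ) ≤ jb ξ := one_le_jb ξ
      have hjb : (0:ℝ) < jb ξ := jb_pos ξ
      have hψpos : 0 < ψ (jb ξ) := lt_of_lt_of_le one_pos (hψge _ hjb1)
      rw [rval_cons]
      have key : |tval ψ lam t ξ| ≤ C₁ * K ^ (tnp t) / (jb ξ) ^ A := by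
        have e1 : ψ (jb ξ) ^ (tnp t) ≤ (K * jb ξ) ^ (tnp t) :=
          pow_le_pow_left₀ hψpos.le (hKb _ hjb1) _
        have e2 : (jb ξ : ℝ) ^ ((tnp t : ℤ) + twt t) ≤ (jb ξ) ^ (-(A : ℤ)) := by
          apply zpow_le_zpow_right₀ hjb1
          omega
        calc |tval ψ lam t ξ| ≤ C₁ * ψ (jb ξ) ^ (tnp t) * (jb ξ) ^ (twt t) := hb₁ ξ
          _ ≤ C₁ * (K * jb ξ) ^ (tnp t) * (jb ξ) ^ (twt t) := by
              apply mul_le_mul_of_nonneg_right (mul_le_mul_of_nonneg_left e1 hC₁.le)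
              positivity
          _ = C₁ * K ^ (tnp t) * (jb ξ) ^ ((tnp t : ℤ) + twt t) := by
              rw [mul_pow, zpow_add₀ (jb_ne ξ), zpow_natCast]
              ring
          _ ≤ C₁ * K ^ (tnp t) * (jb ξ) ^ (-(A : ℤ)) := by
              apply mul_le_mul_of_nonneg_left e2
              positivity
          _ = C₁ * K ^ (tnp t) / (jb ξ) ^ A := by
              rw [zpow_neg, zpow_natCast, div_eq_mul_inv]
      calc |tval ψ lam t ξ + rval ψ lam R ξ|
          ≤ |tval ψ lam t ξ| + |rval ψ lam R ξ| := abs_add_le _ _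
        _ ≤ C₁ * K ^ (tnp t) / (jb ξ) ^ A + C₂ / (jb ξ) ^ A := add_le_add key (hb₂ ξ)
        _ = (C₁ * K ^ (tnp t) + C₂) / (jb ξ) ^ A := by ring

-- stripping the expg atom
lemma mem_expg_of_tne {n : ℕ} (t : List (SAtom n)) (h : tne t ≠ 0) : SAtom.expg ∈ t := by
  induction t with
  | nil => simp [tne] at h
  | cons a t ih =>
      rw [tne_cons] at h
      by_cases ha : ane a = 0
      · exact List.mem_cons_of_mem a (ih (by omega))
      · cases a with
        | expg => exact List.mem_cons_self
        | const c => simp [ane] at ha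
        | coord j => simp [ane] at ha
        | psid k => simp [ane] at ha
        | jbinv => simp [ane] at ha

lemma strip_term {n : ℕ} (ψ : ℝ → ℝ) (lam : ℝ) (t : List (SAtom n)) (h : tne t = 1) :
    (∀ ξ, tval ψ lam t ξ = Real.exp (lam * ψ (jb ξ)) * tval ψ lam (t.erase SAtom.expg) ξ)
    ∧ tne (t.erase SAtom.expg) = 0 ∧ tnp (t.erase SAtom.expg) = tnp t
    ∧ twt (t.erase SAtom.expg) = twt t
    ∧ (okT t → okT (t.erase SAtom.expg)) := by
  have hmem : SAtom.expg ∈ t := mem_expg_of_tne t (by omega)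
  have hp : t.Perm (SAtom.expg :: t.erase SAtom.expg) := List.perm_cons_erase hmem
  refine ⟨fun ξ => ?_, ?_, ?_, ?_, fun hok b hb => hok b (List.mem_of_mem_erase hb)⟩
  · have := ((hp.map (fun a => SAtom.val ψ lam a ξ))).prod_eq
    rw [tval, this]
    simp [tval, SAtom.val]
  · have := ((hp.map ane)).sum_eq
    have h2 : tne t = tne (SAtom.expg :: t.erase SAtom.expg) := this
    rw [tne_cons] at h2
    simp only [ane] at h2
    omega
  · have h2 : tnp t = tnp (SAtom.expg :: t.erase SAtom.expg) := (hp.map anp).sum_eq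
    rw [tnp_cons] at h2
    simp only [anp] at h2
    omega
  · have h2 : twt t = twt (SAtom.expg :: t.erase SAtom.expg) := (hp.map awt).sum_eq
    rw [twt_cons] at h2
    simp only [awt] at h2
    omega

lemma rval_strip {n : ℕ} (ψ : ℝ → ℝ) (lam : ℝ) (R : List (List (SAtom n)))
    (h : ∀ t ∈ R, tne t = 1) (c : ℝ) (ξ : EuclideanSpace ℝ (Fin n)) :
    rval ψ lam ((R.map (fun t => t.erase SAtom.expg)).map (fun t => SAtom.const c :: t)) ξ
      = c * Real.exp (-(lam * ψ (jb ξ))) * rval ψ lam R ξ := by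
  induction R with
  | nil => simp [rval]
  | cons t R ih =>
      have ht := h t (List.mem_cons_self)
      have hstrip := (strip_term ψ lam t ht).1 ξ
      have hexp : Real.exp (-(lam * ψ (jb ξ))) * Real.exp (lam * ψ (jb ξ)) = 1 := by
        rw [← Real.exp_add]; simp
      simp only [List.map_cons, rval_cons, tval_cons,
        ih (fun t' ht' => h t' (List.mem_cons_of_mem t ht'))]
      rw [hstrip]
      simp only [SAtom.val]
      have expand : c * Real.exp (-(lam * ψ (jb ξ))) *
          (Real.exp (lam * ψ (jb ξ)) * tval ψ lam (t.erase SAtom.expg) ξ + rval ψ lam R ξ)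
          = (Real.exp (-(lam * ψ (jb ξ))) * Real.exp (lam * ψ (jb ξ))) *
            (c * tval ψ lam (t.erase SAtom.expg) ξ)
            + c * Real.exp (-(lam * ψ (jb ξ))) * rval ψ lam R ξ := by ring
      rw [expand, hexp, one_mul]

lemma good_strip {n : ℕ} {m : ℕ} {W : ℤ} {R : List (List (SAtom n))} (c : ℝ)
    (ψ : ℝ → ℝ) (lam : ℝ) (h : GoodR 1 m W R) :
    GoodR 0 m W ((R.map (fun t => t.erase SAtom.expg)).map (fun t => SAtom.const c :: t)) := by
  intro t'' ht''
  obtain ⟨t', ht', rfl⟩ := List.mem_map.1 ht''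
  obtain ⟨t, ht, rfl⟩ := List.mem_map.1 ht'
  obtain ⟨h1, h2, h3, h4⟩ := h t ht
  obtain ⟨_, g2, g3, g4, g5⟩ := strip_term ψ lam t h2
  refine ⟨?_, ?_, ?_, ?_⟩
  · intro b hb
    rcases List.mem_cons.1 hb with rfl | hb
    · trivial
    · exact g5 h1 b hb
  · rw [tne_cons]; simp only [ane]; omega
  · rw [tnp_cons]; simp only [anp]; omega
  · rw [twt_cons]; simp only [awt]; omega

/-- For |γ| ≥ 1 and ψ(s) = o(s), the conjugation symbol χ_γ is a symbol of order zero. -/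
theorem stmt1 {n : ℕ} (ψ : ℝ → ℝ)
    (hψsmooth : ContDiff ℝ (⊤ : ℕ∞) ψ)
    (hψmono : MonotoneOn ψ (Set.Ici 1))
    (hψge : ∀ s : ℝ, 1 ≤ s → 1 ≤ ψ s)
    (hψder : ∀ k : ℕ, 1 ≤ k → ∃ C > 0, ∀ s : ℝ, 1 ≤ s →
      |iteratedDeriv k ψ s| ≤ C * ψ s / s ^ k)
    (hψo : Filter.Tendsto (fun s => ψ s / s) Filter.atTop (nhds 0))
    (lam : ℝ) (hlam : 0 < lam) (γ : Fin n → ℕ) (hγ : 1 ≤ ∑ i, γ i) :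
    ∀ α : Fin n → ℕ, ∃ C > 0, ∀ ξ : EuclideanSpace ℝ (Fin n),
      |md α (fun ξ' =>
          (1 / (∏ i, ((γ i).factorial : ℝ))) * Real.exp (-(lam * ψ (jb ξ'))) *
            md γ (fun ν => Real.exp (lam * ψ (jb ν))) ξ') ξ|
        ≤ C / (jb ξ) ^ (∑ i, α i) := by
  intro α
  have hψ : ContDiff ℝ ((⊤ : ℕ∞) : WithTop ℕ∞) ψ := hψsmooth.of_le (by simp)
  set G : ℕ := ∑ i, γ i with hG
  set A : ℕ := ∑ i, α i with hA
  set c : ℝ := 1 / (∏ i, ((γ i).factorial : ℝ)) with hc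
  -- step 1 : the exponential as a representation
  have hF : (fun ν : EuclideanSpace ℝ (Fin n) => Real.exp (lam * ψ (jb ν)))
      = rval ψ lam [[SAtom.expg]] := by
    funext ν
    simp [rval, tval, SAtom.val]
  -- step 2 : derivatives of the exponential
  set Rγ : List (List (SAtom n)) := (mlist γ).foldr (rdx lam) [[SAtom.expg]] with hRγ
  have h1 : md γ (fun ν => Real.exp (lam * ψ (jb ν))) = rval ψ lam Rγ := by
    rw [hF, md_eq_foldr, foldr_pd hψ]
  have hGood0 : GoodR 1 0 0 ([[SAtom.expg]] : List (List (SAtom n))) := by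
    intro t ht
    simp only [List.mem_singleton] at ht
    subst ht
    refine ⟨?_, by simp [tne, ane], by simp [tnp, anp], by simp [twt, awt]⟩
    intro b hb; fin_cases hb; trivial
  have hGoodγ : GoodR 1 G (-(G : ℤ)) Rγ := by
    have := good_foldr (lam := lam) (mlist γ) hGood0
    rw [mlist_length, ← hG] at this
    exact GoodR_mono this (by omega) (by omega)
  -- step 3 : strip the exponential factor
  set R' : List (List (SAtom n)) :=
    (Rγ.map (fun t => t.erase SAtom.expg)).map (fun t => SAtom.const c :: t) with hR'
  have h2 : (fun ξ' => c * Real.exp (-(lam * ψ (jb ξ'))) *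
      md γ (fun ν => Real.exp (lam * ψ (jb ν))) ξ') = rval ψ lam R' := by
    funext ξ'
    rw [h1, hR']
    rw [rval_strip ψ lam Rγ (fun t ht => (hGoodγ t ht).2.1) c ξ']
  have hGood' : GoodR 0 G (-(G : ℤ)) R' :=
    good_strip c ψ lam hGoodγ
  -- step 4 : take the α derivatives
  have h3 : md α (fun ξ' => c * Real.exp (-(lam * ψ (jb ξ'))) *
      md γ (fun ν => Real.exp (lam * ψ (jb ν))) ξ')
      = rval ψ lam ((mlist α).foldr (rdx lam) R') := by
    rw [h2, md_eq_foldr, foldr_pd hψ]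
  have hGoodfin : GoodR 0 G (-(G + A : ℤ)) ((mlist α).foldr (rdx lam) R') := by
    have := good_foldr (lam := lam) (mlist α) hGood'
    rw [mlist_length, ← hA] at this
    exact GoodR_mono this (by omega) (by omega)
  -- step 5 : conclude
  obtain ⟨C, hC, hbd⟩ := rep_bound (lam := lam) hψge hψder
    (hψsmooth.continuous) hψo G A _ hGoodfin
  exact ⟨C, hC, fun ξ => by rw [h3]; exact hbd ξ⟩
end
end

section
/- Let ψ : [1,∞) → ℝ be smooth, increasing, with ψ(s) ≥ 1 for all s ≥ 1, such that for every integer k ≥ 1 there is C_k > 0 with |ψ^{(k)}(s)| ≤ C_k s^{−k} ψ(s) for all s ≥ 1. Then for every multi-index γ ∈ ℕ^n there exists a constant C_γ > 0, independent of λ, such that for every λ ≥ 1 and every ξ ∈ ℝ^n one has |∂_ξ^γ (e^{λψ(⟨ξ⟩)})| ≤ C_γ λ^{|γ|} e^{λψ(⟨ξ⟩)} (ψ(⟨ξ⟩) ⟨ξ⟩^{−1})^{|γ|}. -/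
noncomputable section

open Real Set Filter MeasureTheory

namespace S2

variable {n : ℕ}

local notation "E" => EuclideanSpace ℝ (Fin n)

lemma norm_sq_eq (ξ : E) : ‖ξ‖ ^ 2 = ∑ i, ξ i ^ 2 := by
  rw [EuclideanSpace.norm_eq, Real.sq_sqrt (by positivity)]
  simp [Real.norm_eq_abs, sq_abs]

lemma jb_eq (ξ : E) : jb ξ = Real.sqrt (1 + ∑ i, ξ i ^ 2) := by
  rw [jb, norm_sq_eq]

lemma one_le_jb (ξ : E) : 1 ≤ jb ξ := by
  rw [jb]
  exact Real.one_le_sqrt.mpr (by nlinarith [sq_nonneg ‖ξ‖])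

lemma jb_pos (ξ : E) : 0 < jb ξ := lt_of_lt_of_le one_pos (one_le_jb ξ)

lemma jb_ne (ξ : E) : jb ξ ≠ 0 := ne_of_gt (jb_pos ξ)

lemma jb_sq (ξ : E) : jb ξ ^ 2 = 1 + ∑ i, ξ i ^ 2 := by
  rw [jb_eq, Real.sq_sqrt (by positivity)]

lemma abs_coord_le_jb (ξ : E) (i : Fin n) : |ξ i| ≤ jb ξ := by
  have h1 : (ξ i) ^ 2 ≤ jb ξ ^ 2 := by
    rw [jb_sq]
    have : (ξ i)^2 ≤ ∑ j, ξ j ^2 :=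
      Finset.single_le_sum (fun j _ => sq_nonneg (ξ j)) (Finset.mem_univ i)
    linarith
  calc |ξ i| = Real.sqrt ((ξ i)^2) := (Real.sqrt_sq_eq_abs _).symm
  _ ≤ Real.sqrt (jb ξ ^2) := Real.sqrt_le_sqrt h1
  _ = jb ξ := by rw [Real.sqrt_sq (jb_pos ξ).le]

-- coordinate has fderiv
lemma hasFDerivAt_coord (i : Fin n) (ξ : E) :
    HasFDerivAt (fun ν : E => ν i) (EuclideanSpace.proj (𝕜 := ℝ) i) ξ :=
  (EuclideanSpace.proj (𝕜 := ℝ) i).hasFDerivAt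

lemma proj_single (i j : Fin n) :
    (EuclideanSpace.proj (𝕜 := ℝ) j) (EuclideanSpace.single i 1) = if i = j then 1 else 0 := by
  simp [EuclideanSpace.single_apply, eq_comm]

/-- the fderiv of `jb`. -/
def jbD (ξ : E) : E →L[ℝ] ℝ :=
  (1 / (2 * jb ξ)) • ∑ i, (2 * ξ i) • (EuclideanSpace.proj (𝕜 := ℝ) i)

lemma hasFDerivAt_jb (ξ : E) : HasFDerivAt jb (jbD ξ) ξ := by
  have hQ : HasFDerivAt (fun ν : E => 1 + ∑ i, ν i ^ 2)
      (∑ i, (2 * ξ i) • (EuclideanSpace.proj (𝕜 := ℝ) i)) ξ := by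
    have : HasFDerivAt (fun ν : E => ∑ i, ν i ^ 2)
        (∑ i, (2 * ξ i) • (EuclideanSpace.proj (𝕜 := ℝ) i)) ξ := by
      apply HasFDerivAt.fun_sum
      intro i _
      have := ((hasDerivAt_pow 2 (ξ i)).comp_hasFDerivAt ξ (hasFDerivAt_coord i ξ))
      simpa [Function.comp_def, mul_comm] using this
    simpa using this.const_add 1
  have hs : HasDerivAt Real.sqrt (1 / (2 * Real.sqrt (1 + ∑ i, ξ i ^ 2)))
      (1 + ∑ i, ξ i ^ 2) := Real.hasDerivAt_sqrt (by positivity)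
  have := hs.comp_hasFDerivAt ξ hQ
  have hfun : (Real.sqrt ∘ fun ν : E => 1 + ∑ i, ν i ^ 2) = jb := by
    funext ν; rw [jb_eq]; rfl
  rw [hfun] at this
  rw [jbD, jb_eq ξ]
  exact this

lemma pd_eq {f : E → ℝ} {D : E →L[ℝ] ℝ} {ξ : E} (h : HasFDerivAt f D ξ) (i : Fin n) :
    pd i f ξ = D (EuclideanSpace.single i 1) := by
  rw [pd, h.fderiv]

lemma jbD_single (ξ : E) (i : Fin n) : jbD ξ (EuclideanSpace.single i 1) = ξ i / jb ξ := by
  rw [jbD]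
  simp only [ContinuousLinearMap.smul_apply, ContinuousLinearMap.sum_apply, proj_single]
  rw [Finset.sum_eq_single i]
  · simp; field_simp
  · intro j _ hj; simp [Ne.symm hj]
  · simp

lemma pd_jb (i : Fin n) (ξ : E) : pd i jb ξ = ξ i / jb ξ := by
  rw [pd_eq (hasFDerivAt_jb ξ) i, jbD_single]

end S2

-- Part 2 (appended to w.lean for testing)
namespace S2
variable {n : ℕ}
local notation "E" => EuclideanSpace ℝ (Fin n)

/-- smoothness at level ∞ -/
abbrev Sm (f : E → ℝ) : Prop := ContDiff ℝ ((⊤:ℕ∞) : WithTop ℕ∞) f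

lemma Sm.diffAt {f : E → ℝ} (h : Sm f) (ξ : E) : DifferentiableAt ℝ f ξ :=
  (h.differentiable (by simp)).differentiableAt

lemma contDiff_coord (i : Fin n) : Sm (fun ξ : E => ξ i) :=
  (EuclideanSpace.proj (𝕜 := ℝ) i).contDiff

lemma contDiff_jb : Sm (jb (n := n)) := by
  apply contDiff_iff_contDiffAt.mpr
  intro ξ
  have hQ : Sm (fun ν : E => 1 + ∑ i, ν i ^ 2) :=
    contDiff_const.add (ContDiff.sum fun i _ => (contDiff_coord i).pow 2)
  have hs : ContDiffAt ℝ ((⊤:ℕ∞) : WithTop ℕ∞) Real.sqrt (1 + ∑ i, ξ i ^ 2) :=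
    Real.contDiffAt_sqrt (by positivity)
  have := hs.comp ξ hQ.contDiffAt
  have hfun : (Real.sqrt ∘ fun ν : E => 1 + ∑ i, ν i ^ 2) = jb := by
    funext ν; rw [jb_eq]; rfl
  rwa [hfun] at this

lemma sm_pd {f : E → ℝ} (h : Sm f) (i : Fin n) : Sm (pd i f) := by
  have : pd i f = (fun L : E →L[ℝ] ℝ => L (EuclideanSpace.single i 1)) ∘ fderiv ℝ f := rfl
  rw [this]
  exact (ContinuousLinearMap.apply ℝ ℝ (EuclideanSpace.single i 1)).contDiff.comp
    (h.fderiv_right (m := ((⊤:ℕ∞) : WithTop ℕ∞)) (by norm_cast))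

lemma pd_add {f g : E → ℝ} (i : Fin n) (ξ : E) (hf : DifferentiableAt ℝ f ξ)
    (hg : DifferentiableAt ℝ g ξ) : pd i (f + g) ξ = pd i f ξ + pd i g ξ := by
  have h : HasFDerivAt (f + g) (fderiv ℝ f ξ + fderiv ℝ g ξ) ξ :=
    hf.hasFDerivAt.add hg.hasFDerivAt
  rw [pd_eq h i, ContinuousLinearMap.add_apply]; rfl

lemma pd_const_mul {f : E → ℝ} (c : ℝ) (i : Fin n) (ξ : E) (hf : DifferentiableAt ℝ f ξ) :
    pd i (fun ν => c * f ν) ξ = c * pd i f ξ := by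
  rw [pd_eq (hf.hasFDerivAt.const_mul c) i, ContinuousLinearMap.smul_apply]; rfl

lemma pd_zero (i : Fin n) : pd i (0 : E → ℝ) = 0 := by
  funext ξ; simp [pd, show (0 : E → ℝ) = fun _ => (0:ℝ) from rfl]

lemma pd_mul {f g : E → ℝ} (i : Fin n) (ξ : E) (hf : DifferentiableAt ℝ f ξ)
    (hg : DifferentiableAt ℝ g ξ) :
    pd i (fun ν => f ν * g ν) ξ = pd i f ξ * g ξ + f ξ * pd i g ξ := by
  rw [pd_eq (hf.hasFDerivAt.fun_mul hg.hasFDerivAt) i]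
  simp only [ContinuousLinearMap.add_apply, ContinuousLinearMap.smul_apply, smul_eq_mul]
  rw [pd, pd]; ring

/-- generators of the `jb`-class -/
def bf (a : Fin n → ℕ) (r : ℤ) : E → ℝ := fun ξ => (∏ i, ξ i ^ a i) * jb ξ ^ r

lemma contDiff_zpow_jb (r : ℤ) : Sm (fun ξ : E => jb ξ ^ r) := by
  induction r using Int.induction_on with
  | zero => simpa using (contDiff_const : Sm (fun _ : E => (1:ℝ)))
  | succ k ih =>
      have : (fun ξ : E => jb ξ ^ ((k:ℤ)+1)) = fun ξ : E => jb ξ ^ (k:ℤ) * jb ξ := by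
        funext ξ; rw [zpow_add₀ (jb_ne ξ)]; simp
      rw [this]; exact ih.mul contDiff_jb
  | pred k ih =>
      have : (fun ξ : E => jb ξ ^ (-(k:ℤ)-1)) = fun ξ : E => jb ξ ^ (-(k:ℤ)) * (jb ξ)⁻¹ := by
        funext ξ; rw [sub_eq_add_neg, zpow_add₀ (jb_ne ξ)]; simp
      rw [this]; exact ih.mul (contDiff_jb.inv jb_ne)

lemma bf_smooth (a : Fin n → ℕ) (r : ℤ) : Sm (bf a r) := by
  have hm : Sm (fun ξ : E => ∏ i, ξ i ^ a i) :=
    contDiff_prod fun i _ => (contDiff_coord i).pow (a i)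
  exact hm.mul (contDiff_zpow_jb r)

lemma zpow_jb_pos (ξ : E) (r : ℤ) : 0 < jb ξ ^ r := zpow_pos (jb_pos ξ) r

lemma bf_bound {a : Fin n → ℕ} {r m : ℤ} (hm : (∑ i, (a i : ℤ)) + r ≤ m) (ξ : E) :
    |bf a r ξ| ≤ jb ξ ^ m := by
  have h1 : |∏ i, ξ i ^ a i| ≤ jb ξ ^ (∑ i, (a i : ℤ)) := by
    rw [Finset.abs_prod]
    have : ∀ i ∈ Finset.univ, |ξ i ^ a i| ≤ jb ξ ^ a i := by
      intro i _
      rw [abs_pow]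
      exact pow_le_pow_left₀ (abs_nonneg _) (abs_coord_le_jb ξ i) _
    calc ∏ i, |ξ i ^ a i| ≤ ∏ i, jb ξ ^ a i :=
          Finset.prod_le_prod (fun i _ => abs_nonneg _) this
    _ = jb ξ ^ (∑ i, a i) := by rw [Finset.prod_pow_eq_pow_sum]
    _ = jb ξ ^ (∑ i, (a i : ℤ)) := by
          rw [← zpow_natCast]; norm_cast
  have h2 : |jb ξ ^ r| = jb ξ ^ r := abs_of_pos (zpow_jb_pos ξ r)
  calc |bf a r ξ| = |∏ i, ξ i ^ a i| * |jb ξ ^ r| := abs_mul _ _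
  _ ≤ jb ξ ^ (∑ i, (a i : ℤ)) * jb ξ ^ r := by
      rw [h2]; exact mul_le_mul_of_nonneg_right h1 (zpow_jb_pos ξ r).le
  _ = jb ξ ^ ((∑ i, (a i : ℤ)) + r) := (zpow_add₀ (jb_ne ξ) _ _).symm
  _ ≤ jb ξ ^ m := zpow_le_zpow_right₀ (one_le_jb ξ) hm

end S2
namespace S2
variable {n : ℕ}
local notation "E" => EuclideanSpace ℝ (Fin n)

lemma prod_update (ξ : E) (a : Fin n → ℕ) (i : Fin n) (b : ℕ) :
    ∏ j, ξ j ^ (Function.update a i b j) =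
      ξ i ^ b * ∏ j ∈ Finset.univ.erase i, ξ j ^ a j := by
  have h : ∀ j, ξ j ^ (Function.update a i b j) =
      Function.update (fun j => ξ j ^ a j) i (ξ i ^ b) j := by
    intro j
    rcases eq_or_ne j i with h | h
    · subst h; simp
    · simp [Function.update_apply, h]
  rw [Finset.prod_congr rfl (fun j _ => h j), Finset.prod_update_of_mem (Finset.mem_univ i),
    Finset.erase_eq]

lemma hasFDerivAt_monomial (a : Fin n → ℕ) (ξ : E) :
    HasFDerivAt (fun ν : E => ∏ i, ν i ^ a i)
      (∑ j, ((∏ i ∈ Finset.univ.erase j, ξ i ^ a i) * ((a j : ℝ) * ξ j ^ (a j - 1))) •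
        (EuclideanSpace.proj (𝕜 := ℝ) j)) ξ := by
  have h := HasFDerivAt.finset_prod (u := Finset.univ)
    (g := fun i (ν : E) => ν i ^ a i)
    (g' := fun j => ((a j : ℝ) * ξ j ^ (a j - 1)) • EuclideanSpace.proj (𝕜 := ℝ) j)
    (x := ξ)
    (fun i _ => (hasDerivAt_pow (a i) (ξ i)).comp_hasFDerivAt ξ (hasFDerivAt_coord i ξ))
  refine h.congr_fderiv ?_
  refine Finset.sum_congr rfl fun j _ => ?_
  rw [smul_smul]

lemma pd_monomial (a : Fin n → ℕ) (i : Fin n) (ξ : E) :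
    pd i (fun ν : E => ∏ j, ν j ^ a j) ξ =
      (∏ j ∈ Finset.univ.erase i, ξ j ^ a j) * ((a i : ℝ) * ξ i ^ (a i - 1)) := by
  rw [pd_eq (hasFDerivAt_monomial a ξ) i]
  rw [ContinuousLinearMap.sum_apply]
  rw [Finset.sum_eq_single i]
  · rw [ContinuousLinearMap.smul_apply, proj_single, if_pos rfl, smul_eq_mul, mul_one]
  · intro j _ hj
    rw [ContinuousLinearMap.smul_apply, proj_single, if_neg (Ne.symm hj), smul_zero]
  · intro hi; exact absurd (Finset.mem_univ i) hi

lemma pd_zpow_jb (r : ℤ) (i : Fin n) (ξ : E) :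
    pd i (fun ν : E => jb ν ^ r) ξ = (r : ℝ) * jb ξ ^ (r - 2) * ξ i := by
  have h := (hasDerivAt_zpow r (jb ξ) (Or.inl (jb_ne ξ))).comp_hasFDerivAt ξ (hasFDerivAt_jb ξ)
  have hfun : ((fun x : ℝ => x ^ r) ∘ jb) = (fun ν : E => jb ν ^ r) := rfl
  rw [hfun] at h
  rw [pd_eq h i, ContinuousLinearMap.smul_apply, jbD_single, smul_eq_mul]
  rw [show r - 2 = r - 1 - 1 by ring, zpow_sub₀ (jb_ne ξ) (r-1) 1]
  field_simp

lemma pd_bf (a : Fin n → ℕ) (r : ℤ) (i : Fin n) (ξ : E) :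
    pd i (bf a r) ξ =
      (a i : ℝ) * bf (Function.update a i (a i - 1)) r ξ
      + (r : ℝ) * bf (Function.update a i (a i + 1)) (r - 2) ξ := by
  have hmon : Sm (fun ν : E => ∏ j, ν j ^ a j) :=
    contDiff_prod fun j _ => (contDiff_coord j).pow (a j)
  have hz : Sm (fun ν : E => jb ν ^ r) := contDiff_zpow_jb r
  have hbf : bf a r = fun ν => (fun μ : E => ∏ j, μ j ^ a j) ν * (fun μ : E => jb μ ^ r) ν := rfl
  rw [hbf, pd_mul i ξ (hmon.diffAt ξ) (hz.diffAt ξ), pd_monomial, pd_zpow_jb]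
  simp only [bf, prod_update]
  have hsplit : ∏ j, ξ j ^ a j = ξ i ^ a i * ∏ j ∈ Finset.univ.erase i, ξ j ^ a j := by
    rw [← prod_update ξ a i (a i), Function.update_eq_self]
  rw [hsplit, pow_succ]
  ring

/-- The class of linear combinations of `bf a r` with `∑ a + r ≤ m`. -/
inductive JB : ℤ → ((EuclideanSpace ℝ (Fin n)) → ℝ) → Prop
  | base (a : Fin n → ℕ) (r m : ℤ) (hm : (∑ i, (a i : ℤ)) + r ≤ m) : JB m (bf a r)
  | zero (m : ℤ) : JB m 0
  | add {m : ℤ} {f g : EuclideanSpace ℝ (Fin n) → ℝ} (hf : JB m f) (hg : JB m g) :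
      JB m (f + g)
  | smul (c : ℝ) {m : ℤ} {f : EuclideanSpace ℝ (Fin n) → ℝ} (hf : JB m f) :
      JB m (fun ξ => c * f ξ)

lemma JB.smooth {m : ℤ} {f : E → ℝ} (h : JB m f) : Sm f := by
  induction h with
  | base a r m hm => exact bf_smooth a r
  | zero m => exact contDiff_const (c := (0:ℝ))
  | add hf hg ihf ihg => exact ihf.add ihg
  | smul c hf ih => exact contDiff_const.mul ih

lemma JB.bound {m : ℤ} {f : E → ℝ} (h : JB m f) :
    ∃ C > 0, ∀ ξ : E, |f ξ| ≤ C * jb ξ ^ m := by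
  induction h with
  | base a r m hm =>
      exact ⟨1, one_pos, fun ξ => by simpa using bf_bound hm ξ⟩
  | zero m =>
      exact ⟨1, one_pos, fun ξ => by simp [(zpow_jb_pos ξ m).le]⟩
  | add hf hg ihf ihg =>
      rename_i m' f' g'
      obtain ⟨C1, hC1, h1⟩ := ihf
      obtain ⟨C2, hC2, h2⟩ := ihg
      refine ⟨C1 + C2, by linarith, fun ξ => ?_⟩
      calc |(f' + g') ξ| ≤ |f' ξ| + |g' ξ| := abs_add_le _ _
      _ ≤ C1 * jb ξ ^ m' + C2 * jb ξ ^ m' := add_le_add (h1 ξ) (h2 ξ)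
      _ = (C1 + C2) * jb ξ ^ m' := by ring
  | smul c hf ih =>
      rename_i m' f'
      obtain ⟨C, hC, h1⟩ := ih
      refine ⟨(|c| + 1) * C, by positivity, fun ξ => ?_⟩
      rw [abs_mul]
      calc |c| * |f' ξ| ≤ (|c| + 1) * (C * jb ξ ^ m') := by
            apply mul_le_mul (by linarith) (h1 ξ) (abs_nonneg _) (by positivity)
      _ = (|c| + 1) * C * jb ξ ^ m' := by ring

lemma sum_erase_cast (a : Fin n → ℕ) (i : Fin n) :
    ∑ j, (a j : ℤ) = (a i : ℤ) + ∑ j ∈ Finset.univ.erase i, (a j : ℤ) := by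
  rw [← Finset.add_sum_erase _ _ (Finset.mem_univ i)]

lemma sum_update_cast (a : Fin n → ℕ) (i : Fin n) (b : ℕ) :
    ∑ j, ((Function.update a i b j : ℕ) : ℤ)
      = (b : ℤ) + ∑ j ∈ Finset.univ.erase i, (a j : ℤ) := by
  have h : ∀ j, ((Function.update a i b j : ℕ) : ℤ)
      = Function.update (fun j => (a j : ℤ)) i (b : ℤ) j := by
    intro j
    rcases eq_or_ne j i with h | h
    · subst h; simp
    · simp [Function.update_apply, h]
  rw [Finset.sum_congr rfl (fun j _ => h j), Finset.sum_update_of_mem (Finset.mem_univ i),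
    Finset.erase_eq]

lemma JB.pd' {m : ℤ} {f : E → ℝ} (h : JB m f) (i : Fin n) : JB (m - 1) (pd i f) := by
  induction h with
  | base a r m hm =>
      have hpd : pd i (bf a r) =
          (fun ξ => (a i : ℝ) * bf (Function.update a i (a i - 1)) r ξ)
          + (fun ξ => (r : ℝ) * bf (Function.update a i (a i + 1)) (r - 2) ξ) := by
        funext ξ; rw [pd_bf]; rfl
      rw [hpd]
      apply JB.add
      · rcases Nat.eq_zero_or_pos (a i) with hai | hai
        · have : (fun ξ : E => (a i : ℝ) * bf (Function.update a i (a i - 1)) r ξ)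
              = (0 : E → ℝ) := by
            funext ξ; rw [hai]; simp
          rw [this]; exact JB.zero _
        · apply JB.smul
          apply JB.base
          rw [sum_update_cast]
          have := sum_erase_cast a i
          have hcast : ((a i - 1 : ℕ) : ℤ) = (a i : ℤ) - 1 := by
            omega
          omega
      · apply JB.smul
        apply JB.base
        rw [sum_update_cast]
        have := sum_erase_cast a i
        have hcast : ((a i + 1 : ℕ) : ℤ) = (a i : ℤ) + 1 := by push_cast; ring
        omega
  | zero m => rw [pd_zero]; exact JB.zero _
  | add hf hg ihf ihg =>
      rename_i m' f' g'
      have heq : pd i (f' + g') = pd i f' + pd i g' := by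
        funext ξ
        exact pd_add i ξ (hf.smooth.diffAt ξ) (hg.smooth.diffAt ξ)
      rw [heq]; exact JB.add ihf ihg
  | smul c hf ih =>
      rename_i m' f'
      have heq : pd i (fun ξ => c * f' ξ) = fun ξ => c * pd i f' ξ := by
        funext ξ
        exact pd_const_mul c i ξ (hf.smooth.diffAt ξ)
      rw [heq]; exact JB.smul c ih

lemma bf_mul_xdiv (a : Fin n → ℕ) (r : ℤ) (i : Fin n) (ξ : E) :
    ξ i / jb ξ * bf a r ξ = bf (Function.update a i (a i + 1)) (r - 1) ξ := by
  rw [bf, bf, prod_update]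
  have hsplit : ∏ j, ξ j ^ a j = ξ i ^ a i * ∏ j ∈ Finset.univ.erase i, ξ j ^ a j := by
    rw [← prod_update ξ a i (a i), Function.update_eq_self]
  rw [hsplit, zpow_sub₀ (jb_ne ξ), pow_succ, zpow_one]
  field_simp

lemma JB.mul_xdiv {m : ℤ} {f : E → ℝ} (h : JB m f) (i : Fin n) :
    JB m (fun ξ => ξ i / jb ξ * f ξ) := by
  induction h with
  | base a r m hm =>
      have : (fun ξ : E => ξ i / jb ξ * bf a r ξ)
          = bf (Function.update a i (a i + 1)) (r - 1) := by
        funext ξ; exact bf_mul_xdiv a r i ξ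
      rw [this]
      apply JB.base
      rw [sum_update_cast]
      have := sum_erase_cast a i
      have hcast : ((a i + 1 : ℕ) : ℤ) = (a i : ℤ) + 1 := by push_cast; ring
      omega
  | zero m =>
      have : (fun ξ : E => ξ i / jb ξ * (0 : E → ℝ) ξ) = (0 : E → ℝ) := by
        funext ξ; simp
      rw [this]; exact JB.zero _
  | add hf hg ihf ihg =>
      rename_i m' f' g'
      have heq : (fun ξ : E => ξ i / jb ξ * (f' + g') ξ)
          = (fun ξ : E => ξ i / jb ξ * f' ξ) + (fun ξ : E => ξ i / jb ξ * g' ξ) := by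
        funext ξ; simp only [Pi.add_apply]; ring
      rw [heq]; exact JB.add ihf ihg
  | smul c hf ih =>
      rename_i m' f'
      have heq : (fun ξ : E => ξ i / jb ξ * (fun ν => c * f' ν) ξ)
          = (fun ξ : E => c * (ξ i / jb ξ * f' ξ)) := by
        funext ξ; ring
      rw [heq]; exact JB.smul c ih

/-- iterated directional derivative along a list of coordinates -/
def Dl (L : List (Fin n)) (f : (EuclideanSpace ℝ (Fin n)) → ℝ) :
    (EuclideanSpace ℝ (Fin n)) → ℝ := L.foldr pd f

@[simp] lemma Dl_nil (f : E → ℝ) : Dl [] f = f := rfl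

@[simp] lemma Dl_cons (i : Fin n) (L : List (Fin n)) (f : E → ℝ) :
    Dl (i :: L) f = pd i (Dl L f) := rfl

lemma JB_Dl_jb (L : List (Fin n)) : JB (1 - L.length) (Dl L jb) := by
  induction L with
  | nil =>
      have : Dl [] jb = bf (n := n) (fun _ => 0) 1 := by
        funext ξ; simp [Dl, bf]
      rw [this]
      apply JB.base
      simp
  | cons i L ih =>
      have h := ih.pd' i
      have hc : (1 - ((i :: L).length : ℤ)) = 1 - (L.length : ℤ) - 1 := by
        simp only [List.length_cons]; push_cast; ring
      rw [Dl_cons, hc]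
      exact h

end S2
namespace S2
variable {n : ℕ}
local notation "E" => EuclideanSpace ℝ (Fin n)

variable {ψ : ℝ → ℝ}

/-- the weight composed with the bracket -/
def uu (ψ : ℝ → ℝ) : (EuclideanSpace ℝ (Fin n)) → ℝ := fun ξ => ψ (jb ξ)

lemma contDiff_iteratedDeriv (hψ : ContDiff ℝ ((⊤:ℕ∞) : WithTop ℕ∞) ψ) (k : ℕ) :
    ContDiff ℝ ((⊤:ℕ∞) : WithTop ℕ∞) (iteratedDeriv k ψ) := by
  rw [iteratedDeriv_eq_iterate]; exact hψ.iterate_deriv k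

lemma hasDerivAt_iteratedDeriv (hψ : ContDiff ℝ ((⊤:ℕ∞) : WithTop ℕ∞) ψ) (k : ℕ) (s : ℝ) :
    HasDerivAt (iteratedDeriv k ψ) (iteratedDeriv (k+1) ψ s) s := by
  rw [iteratedDeriv_succ]
  exact ((contDiff_iteratedDeriv hψ k).differentiable (by simp) s).hasDerivAt

lemma contDiff_psik_jb (hψ : ContDiff ℝ ((⊤:ℕ∞) : WithTop ℕ∞) ψ) (k : ℕ) :
    Sm (fun ξ : E => iteratedDeriv k ψ (jb ξ)) :=
  (contDiff_iteratedDeriv hψ k).comp contDiff_jb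

lemma pd_psik_jb (hψ : ContDiff ℝ ((⊤:ℕ∞) : WithTop ℕ∞) ψ) (k : ℕ) (i : Fin n) (ξ : E) :
    pd i (fun ν : E => iteratedDeriv k ψ (jb ν)) ξ
      = iteratedDeriv (k+1) ψ (jb ξ) * (ξ i / jb ξ) := by
  have h := (hasDerivAt_iteratedDeriv hψ k (jb ξ)).comp_hasFDerivAt ξ (hasFDerivAt_jb ξ)
  have hfun : (iteratedDeriv k ψ ∘ jb) = (fun ν : E => iteratedDeriv k ψ (jb ν)) := rfl
  rw [hfun] at h
  rw [pd_eq h i, ContinuousLinearMap.smul_apply, jbD_single, smul_eq_mul]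

/-- class of functions appearing as iterated derivatives of `ψ ∘ jb` of total order `m` -/
inductive PS (ψ : ℝ → ℝ) : ℕ → ((EuclideanSpace ℝ (Fin n)) → ℝ) → Prop
  | base (k m : ℕ) (hk : 1 ≤ k) (h : (EuclideanSpace ℝ (Fin n)) → ℝ)
      (hh : JB ((k:ℤ) - (m:ℤ)) h) :
      PS ψ m (fun ξ => iteratedDeriv k ψ (jb ξ) * h ξ)
  | zero (m : ℕ) : PS ψ m 0
  | add {m : ℕ} {f g : (EuclideanSpace ℝ (Fin n)) → ℝ} (hf : PS ψ m f) (hg : PS ψ m g) :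
      PS ψ m (f + g)

lemma PS.smooth (hψ : ContDiff ℝ ((⊤:ℕ∞) : WithTop ℕ∞) ψ) {m : ℕ} {f : E → ℝ}
    (h : PS ψ m f) : Sm f := by
  induction h with
  | base k m hk h hh => exact (contDiff_psik_jb hψ k).mul hh.smooth
  | zero m => exact contDiff_const (c := (0:ℝ))
  | add hf hg ihf ihg => exact ihf.add ihg

lemma PS.pd' (hψ : ContDiff ℝ ((⊤:ℕ∞) : WithTop ℕ∞) ψ) {m : ℕ} {f : E → ℝ}
    (h : PS ψ m f) (i : Fin n) : PS ψ (m+1) (pd i f) := by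
  induction h with
  | base k m hk h hh =>
      have heq : pd i (fun ξ : E => iteratedDeriv k ψ (jb ξ) * h ξ)
          = (fun ξ : E => iteratedDeriv (k+1) ψ (jb ξ) * ((fun ν : E => ν i / jb ν * h ν) ξ))
            + (fun ξ : E => iteratedDeriv k ψ (jb ξ) * (pd i h) ξ) := by
        funext ξ
        have hd1 := (contDiff_psik_jb hψ k).diffAt ξ
        have hd2 := hh.smooth.diffAt ξ
        rw [show (fun ξ : E => iteratedDeriv k ψ (jb ξ) * h ξ)
            = (fun ξ : E => (fun ν : E => iteratedDeriv k ψ (jb ν)) ξ * h ξ) from rfl]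
        rw [pd_mul i ξ hd1 hd2, pd_psik_jb hψ k i ξ]
        simp only [Pi.add_apply]
        ring
      rw [heq]
      apply PS.add
      · have h1 : JB ((↑(k+1):ℤ) - (↑(m+1):ℤ)) (fun ν : E => ν i / jb ν * h ν) := by
          have := hh.mul_xdiv i
          have hc : ((↑(k+1):ℤ) - (↑(m+1):ℤ)) = (k:ℤ) - (m:ℤ) := by push_cast; ring
          rw [hc]
          exact this
        exact PS.base (k+1) (m+1) (by omega) _ h1
      · have h2 : JB ((k:ℤ) - (↑(m+1):ℤ)) (pd i h) := by
          have := hh.pd' i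
          have hc : ((k:ℤ) - (↑(m+1):ℤ)) = (k:ℤ) - (m:ℤ) - 1 := by push_cast; ring
          rw [hc]
          exact this
        exact PS.base k (m+1) hk _ h2
  | zero m => rw [pd_zero]; exact PS.zero _
  | add hf hg ihf ihg =>
      rename_i m' f' g'
      have heq : pd i (f' + g') = pd i f' + pd i g' := by
        funext ξ
        exact pd_add i ξ ((hf.smooth hψ).diffAt ξ) ((hg.smooth hψ).diffAt ξ)
      rw [heq]; exact PS.add ihf ihg

lemma PS.bound (hψge : ∀ s : ℝ, 1 ≤ s → 1 ≤ ψ s)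
    (hψder : ∀ k : ℕ, 1 ≤ k → ∃ C > 0, ∀ s : ℝ, 1 ≤ s →
      |iteratedDeriv k ψ s| ≤ C * ψ s / s ^ k)
    {m : ℕ} {f : E → ℝ} (h : PS ψ m f) :
    ∃ C > 0, ∀ ξ : E, |f ξ| ≤ C * (ψ (jb ξ) * jb ξ ^ (-(m:ℤ))) := by
  induction h with
  | base k m hk h hh =>
      obtain ⟨Ck, hCk, hCk2⟩ := hψder k hk
      obtain ⟨C', hC', hC'2⟩ := hh.bound
      refine ⟨Ck * C', by positivity, fun ξ => ?_⟩
      have h1 : |iteratedDeriv k ψ (jb ξ)| ≤ Ck * ψ (jb ξ) / jb ξ ^ k :=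
        hCk2 (jb ξ) (one_le_jb ξ)
      have h2 : |h ξ| ≤ C' * jb ξ ^ ((k:ℤ) - (m:ℤ)) := hC'2 ξ
      have hψpos : 0 < ψ (jb ξ) := lt_of_lt_of_le one_pos (hψge (jb ξ) (one_le_jb ξ))
      rw [abs_mul]
      calc |iteratedDeriv k ψ (jb ξ)| * |h ξ|
          ≤ (Ck * ψ (jb ξ) / jb ξ ^ k) * (C' * jb ξ ^ ((k:ℤ) - (m:ℤ))) := by
            apply mul_le_mul h1 h2 (abs_nonneg _)
            exact div_nonneg (mul_nonneg hCk.le hψpos.le) (pow_nonneg (jb_pos ξ).le k)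
      _ = Ck * C' * (ψ (jb ξ) * jb ξ ^ (-(m:ℤ))) := by
            have e1 : jb ξ ^ ((k:ℤ) - (m:ℤ)) = jb ξ ^ (k:ℕ) * jb ξ ^ (-(m:ℤ)) := by
              rw [sub_eq_add_neg, zpow_add₀ (jb_ne ξ), zpow_natCast]
            rw [e1, zpow_neg, zpow_natCast]
            have hk0 : (jb ξ : ℝ) ^ (k:ℕ) ≠ 0 := pow_ne_zero _ (jb_ne ξ)
            have hm0 : (jb ξ : ℝ) ^ (m:ℕ) ≠ 0 := pow_ne_zero _ (jb_ne ξ)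
            field_simp
  | zero m =>
      refine ⟨1, one_pos, fun ξ => ?_⟩
      have hψpos : 0 < ψ (jb ξ) := lt_of_lt_of_le one_pos (hψge (jb ξ) (one_le_jb ξ))
      have h0 : (0:ℝ) ≤ ψ (jb ξ) * jb ξ ^ (-(m:ℤ)) :=
        mul_nonneg hψpos.le (zpow_jb_pos ξ (-(m:ℤ))).le
      simpa using h0
  | add hf hg ihf ihg =>
      rename_i m' f' g'
      obtain ⟨C1, hC1, h1⟩ := ihf
      obtain ⟨C2, hC2, h2⟩ := ihg
      refine ⟨C1 + C2, by linarith, fun ξ => ?_⟩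
      calc |(f' + g') ξ| ≤ |f' ξ| + |g' ξ| := abs_add_le _ _
      _ ≤ C1 * (ψ (jb ξ) * jb ξ ^ (-(m':ℤ))) + C2 * (ψ (jb ξ) * jb ξ ^ (-(m':ℤ))) :=
          add_le_add (h1 ξ) (h2 ξ)
      _ = (C1 + C2) * (ψ (jb ξ) * jb ξ ^ (-(m':ℤ))) := by ring

lemma bf_zero_zero (ξ : E) : bf (fun _ => 0) 0 ξ = 1 := by simp [bf]

lemma PS_pd_u (hψ : ContDiff ℝ ((⊤:ℕ∞) : WithTop ℕ∞) ψ) (i : Fin n) :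
    PS ψ 1 (pd i (uu ψ (n := n))) := by
  have heq : pd i (uu ψ (n := n)) = fun ξ : E =>
      iteratedDeriv 1 ψ (jb ξ) * ((fun ν : E => ν i / jb ν * bf (fun _ => 0) 0 ν) ξ) := by
    funext ξ
    have h := (hψ.differentiable (by simp) (jb ξ)).hasDerivAt
    have h2 := h.comp_hasFDerivAt ξ (hasFDerivAt_jb ξ)
    have hfun : (ψ ∘ jb) = uu ψ (n := n) := rfl
    rw [hfun] at h2
    rw [pd_eq h2 i, ContinuousLinearMap.smul_apply, jbD_single, smul_eq_mul]
    simp only [bf_zero_zero, iteratedDeriv_one, mul_one]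
  rw [heq]
  refine PS.base 1 1 le_rfl _ ?_
  have h0 : JB (0:ℤ) (bf (n := n) (fun _ => 0) 0) := JB.base _ _ _ (by simp)
  have := h0.mul_xdiv i
  simpa using this

lemma PS_Dl_u (hψ : ContDiff ℝ ((⊤:ℕ∞) : WithTop ℕ∞) ψ) (L : List (Fin n)) (hL : L ≠ []) :
    PS ψ L.length (Dl L (uu ψ)) := by
  induction L with
  | nil => exact absurd rfl hL
  | cons i L ih =>
      rcases eq_or_ne L [] with h | h
      · subst h
        simpa using PS_pd_u hψ i
      · have := (ih h).pd' hψ i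
        simpa using this

end S2
namespace S2
variable {n : ℕ}
local notation "E" => EuclideanSpace ℝ (Fin n)
variable {ψ : ℝ → ℝ}

lemma pd_prod {k : ℕ} (v : Fin k → E → ℝ) (hv : ∀ j, Sm (v j)) (i : Fin n) (ξ : E) :
    pd i (fun ν : E => ∏ j, v j ν) ξ
      = ∑ j0, ∏ j, Function.update v j0 (pd i (v j0)) j ξ := by
  have h := HasFDerivAt.finset_prod (u := Finset.univ) (g := fun j (ν : E) => v j ν)
    (g' := fun j => fderiv ℝ (v j) ξ) (x := ξ) (fun j _ => ((hv j).diffAt ξ).hasFDerivAt)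
  rw [pd_eq h i, ContinuousLinearMap.sum_apply]
  apply Finset.sum_congr rfl
  intro j0 _
  rw [ContinuousLinearMap.smul_apply, smul_eq_mul]
  have hupd : ∀ j, Function.update v j0 (pd i (v j0)) j ξ
      = Function.update (fun j => v j ξ) j0 (pd i (v j0) ξ) j := by
    intro j
    rcases eq_or_ne j j0 with h | h
    · subst h; simp
    · simp [Function.update_apply, h]
  rw [Finset.prod_congr rfl (fun j _ => hupd j),
    Finset.prod_update_of_mem (Finset.mem_univ j0)]
  rw [show pd i (v j0) ξ = (fderiv ℝ (v j0) ξ) (EuclideanSpace.single i 1) from rfl]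
  rw [Finset.erase_eq]
  ring

lemma prod_cons_apply {k : ℕ} (x : E → ℝ) (v : Fin k → E → ℝ) (ξ : E) :
    ∏ j : Fin (k+1), (Fin.cons x v : Fin (k+1) → E → ℝ) j ξ = x ξ * ∏ j, v j ξ := by
  have h : ∀ j : Fin (k+1), (Fin.cons x v : Fin (k+1) → E → ℝ) j ξ
      = (Fin.cons (x ξ) (fun j' => v j' ξ) : Fin (k+1) → ℝ) j := by
    intro j
    refine Fin.cases ?_ ?_ j <;> simp
  rw [Finset.prod_congr rfl (fun j _ => h j), Fin.prod_cons]

/-- class of λ-coefficient functions in the expansion of ∂^L e^{λ ψ(⟨ξ⟩)} -/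
inductive QC (ψ : ℝ → ℝ) : ℕ → (ℝ → (EuclideanSpace ℝ (Fin n)) → ℝ) → Prop
  | base (k : ℕ) (v : Fin k → (EuclideanSpace ℝ (Fin n)) → ℝ) (m : Fin k → ℕ)
      (hm : ∀ j, 1 ≤ m j) (hv : ∀ j, PS ψ (m j) (v j)) :
      QC ψ (∑ j, m j) (fun lam ξ => lam ^ k * ∏ j, v j ξ)
  | zero (M : ℕ) : QC ψ M (fun _ _ => 0)
  | add {M : ℕ} {q1 q2 : ℝ → (EuclideanSpace ℝ (Fin n)) → ℝ}
      (h1 : QC ψ M q1) (h2 : QC ψ M q2) : QC ψ M (fun lam ξ => q1 lam ξ + q2 lam ξ)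

lemma QC.smooth (hψ : ContDiff ℝ ((⊤:ℕ∞) : WithTop ℕ∞) ψ) {M : ℕ}
    {q : ℝ → E → ℝ} (h : QC ψ M q) (lam : ℝ) : Sm (q lam) := by
  induction h with
  | base k v m hm hv =>
      exact contDiff_const.mul (contDiff_prod fun j _ => (hv j).smooth hψ)
  | zero M => exact contDiff_const (c := (0:ℝ))
  | add h1 h2 ih1 ih2 => exact ih1.add ih2

lemma QC.sum' {ι : Type*} (s : Finset ι) {M : ℕ} {q : ι → ℝ → E → ℝ}
    (h : ∀ j ∈ s, QC ψ M (q j)) :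
    QC ψ M (fun lam ξ => ∑ j ∈ s, q j lam ξ) := by
  classical
  induction s using Finset.induction_on with
  | empty => simpa using QC.zero M
  | insert a s hns ih =>
      have heq : (fun lam ξ => ∑ j ∈ insert a s, q j lam ξ)
          = fun lam ξ => q a lam ξ + ∑ j ∈ s, q j lam ξ := by
        funext lam ξ; rw [Finset.sum_insert hns]
      rw [heq]
      exact QC.add (h a (Finset.mem_insert_self a s))
        (ih fun j hj => h j (Finset.mem_insert_of_mem hj))

lemma QC.bound (hψge : ∀ s : ℝ, 1 ≤ s → 1 ≤ ψ s)
    (hψder : ∀ k : ℕ, 1 ≤ k → ∃ C > 0, ∀ s : ℝ, 1 ≤ s →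
      |iteratedDeriv k ψ s| ≤ C * ψ s / s ^ k)
    {M : ℕ} {q : ℝ → E → ℝ} (h : QC ψ M q) :
    ∃ C > 0, ∀ lam : ℝ, 1 ≤ lam → ∀ ξ : E,
      |q lam ξ| ≤ C * (lam ^ M * (ψ (jb ξ) ^ M * jb ξ ^ (-(M:ℤ)))) := by
  induction h with
  | base k v m hm hv =>
      choose Cv hCv1 hCv2 using fun j => (hv j).bound hψge hψder
      refine ⟨∏ j, Cv j, Finset.prod_pos (fun j _ => hCv1 j), fun lam hlam ξ => ?_⟩
      have hψ1 : 1 ≤ ψ (jb ξ) := hψge (jb ξ) (one_le_jb ξ)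
      have hkM : k ≤ ∑ j, m j := by
        calc k = ∑ _j : Fin k, 1 := by simp
        _ ≤ ∑ j, m j := Finset.sum_le_sum fun j _ => hm j
      have habs : |lam ^ k * ∏ j, v j ξ| ≤ lam ^ k * ∏ j, |v j ξ| := by
        rw [abs_mul, abs_pow, Finset.abs_prod, abs_of_nonneg (by linarith : (0:ℝ) ≤ lam)]
      have hprod : ∏ j, |v j ξ| ≤ ∏ j, (Cv j * (ψ (jb ξ) * jb ξ ^ (-(m j : ℤ)))) :=
        Finset.prod_le_prod (fun j _ => abs_nonneg _) (fun j _ => hCv2 j ξ)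
      have hzp : ∏ j, (jb ξ ^ (-(m j : ℤ))) = jb ξ ^ (-((∑ j, m j : ℕ) : ℤ)) := by
        have : ∀ j : Fin k, jb ξ ^ (-(m j : ℤ)) = (jb ξ ^ (m j : ℕ))⁻¹ := by
          intro j; rw [zpow_neg, zpow_natCast]
        rw [Finset.prod_congr rfl (fun j _ => this j), Finset.prod_inv_distrib,
          Finset.prod_pow_eq_pow_sum, zpow_neg, zpow_natCast]
      have heq2 : ∏ j, (Cv j * (ψ (jb ξ) * jb ξ ^ (-(m j : ℤ))))
          = (∏ j, Cv j) * (ψ (jb ξ) ^ k * jb ξ ^ (-((∑ j, m j : ℕ) : ℤ))) := by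
        rw [Finset.prod_mul_distrib, Finset.prod_mul_distrib, hzp,
          Finset.prod_const, Finset.card_univ, Fintype.card_fin]
      have hlk : lam ^ k ≤ lam ^ (∑ j, m j) := pow_le_pow_right₀ hlam hkM
      have hpk : ψ (jb ξ) ^ k ≤ ψ (jb ξ) ^ (∑ j, m j) := pow_le_pow_right₀ hψ1 hkM
      have hC0 : (0:ℝ) ≤ ∏ j, Cv j := (Finset.prod_pos (fun j _ => hCv1 j)).le
      have hjz : (0:ℝ) < jb ξ ^ (-((∑ j, m j : ℕ) : ℤ)) := zpow_jb_pos ξ _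
      calc |lam ^ k * ∏ j, v j ξ| ≤ lam ^ k * ∏ j, |v j ξ| := habs
      _ ≤ lam ^ k * ((∏ j, Cv j) * (ψ (jb ξ) ^ k * jb ξ ^ (-((∑ j, m j : ℕ) : ℤ)))) := by
          rw [← heq2]
          apply mul_le_mul_of_nonneg_left hprod
          exact pow_nonneg (by linarith) k
      _ ≤ lam ^ (∑ j, m j) * ((∏ j, Cv j) * (ψ (jb ξ) ^ (∑ j, m j) * jb ξ ^ (-((∑ j, m j : ℕ) : ℤ)))) := by
          apply mul_le_mul hlk _ _ (pow_nonneg (by linarith) _)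
          · apply mul_le_mul_of_nonneg_left _ hC0
            exact mul_le_mul_of_nonneg_right hpk hjz.le
          · apply mul_nonneg hC0
            apply mul_nonneg (pow_nonneg (by linarith) _) hjz.le
      _ = (∏ j, Cv j) * (lam ^ (∑ j, m j) * (ψ (jb ξ) ^ (∑ j, m j) * jb ξ ^ (-((∑ j, m j : ℕ) : ℤ)))) := by
          ring
  | zero M =>
      refine ⟨1, one_pos, fun lam hlam ξ => ?_⟩
      have hψ1 : 1 ≤ ψ (jb ξ) := hψge (jb ξ) (one_le_jb ξ)
      have h0 : (0:ℝ) ≤ lam ^ M * (ψ (jb ξ) ^ M * jb ξ ^ (-(M:ℤ))) := by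
        apply mul_nonneg (pow_nonneg (by linarith) _)
        exact mul_nonneg (pow_nonneg (by linarith) _) (zpow_jb_pos ξ _).le
      simpa using h0
  | add h1 h2 ih1 ih2 =>
      rename_i M' q1 q2
      obtain ⟨C1, hC1, hb1⟩ := ih1
      obtain ⟨C2, hC2, hb2⟩ := ih2
      refine ⟨C1 + C2, by linarith, fun lam hlam ξ => ?_⟩
      calc |q1 lam ξ + q2 lam ξ| ≤ |q1 lam ξ| + |q2 lam ξ| := abs_add_le _ _
      _ ≤ C1 * (lam ^ M' * (ψ (jb ξ) ^ M' * jb ξ ^ (-(M':ℤ))))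
          + C2 * (lam ^ M' * (ψ (jb ξ) ^ M' * jb ξ ^ (-(M':ℤ)))) :=
          add_le_add (hb1 lam hlam ξ) (hb2 lam hlam ξ)
      _ = (C1 + C2) * (lam ^ M' * (ψ (jb ξ) ^ M' * jb ξ ^ (-(M':ℤ)))) := by ring

lemma QC.step (hψ : ContDiff ℝ ((⊤:ℕ∞) : WithTop ℕ∞) ψ) (i : Fin n) {M : ℕ}
    {q : ℝ → E → ℝ} (h : QC ψ M q) :
    QC ψ (M + 1) (fun lam ξ => lam * pd i (uu ψ) ξ * q lam ξ + pd i (q lam) ξ) := by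
  induction h with
  | zero M =>
      have heq : (fun (lam : ℝ) (ξ : E) =>
          lam * pd i (uu ψ) ξ * (0:ℝ) + pd i (fun _ => (0:ℝ)) ξ)
          = fun _ _ => (0:ℝ) := by
        funext lam ξ
        have : pd i (fun _ : E => (0:ℝ)) = 0 := pd_zero i
        rw [this]
        simp
      rw [heq]
      exact QC.zero _
  | add h1 h2 ih1 ih2 =>
      rename_i M' q1 q2
      have heq : (fun (lam : ℝ) (ξ : E) =>
            lam * pd i (uu ψ) ξ * (q1 lam ξ + q2 lam ξ)
            + pd i (fun ν => q1 lam ν + q2 lam ν) ξ)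
          = fun lam ξ =>
            (lam * pd i (uu ψ) ξ * q1 lam ξ + pd i (q1 lam) ξ)
            + (lam * pd i (uu ψ) ξ * q2 lam ξ + pd i (q2 lam) ξ) := by
        funext lam ξ
        have hpd : pd i (fun ν => q1 lam ν + q2 lam ν) ξ = pd i (q1 lam) ξ + pd i (q2 lam) ξ := by
          have := pd_add i ξ ((h1.smooth hψ lam).diffAt ξ) ((h2.smooth hψ lam).diffAt ξ)
          exact this
        rw [hpd]
        ring
      rw [heq]
      exact QC.add ih1 ih2
  | base k v m hm hv =>
      -- term 1 : lam^{k+1} * (pd i u * ∏ v)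
      have hT1 : QC ψ (∑ j, m j + 1)
          (fun lam ξ => lam ^ (k+1) * ∏ j, (Fin.cons (pd i (uu ψ)) v : Fin (k+1) → E → ℝ) j ξ) := by
        have hb := QC.base (ψ := ψ) (k+1) (Fin.cons (pd i (uu ψ)) v) (Fin.cons 1 m)
          (fun j => by
            refine Fin.cases ?_ ?_ j
            · exact le_rfl
            · intro j'; exact hm j')
          (fun j => by
            refine Fin.cases ?_ ?_ j
            · exact PS_pd_u hψ i
            · intro j'; exact hv j')
        have hsum : ∑ j, (Fin.cons 1 m : Fin (k+1) → ℕ) j = ∑ j, m j + 1 := by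
          rw [Fin.sum_cons]; omega
        rwa [hsum] at hb
      -- term 2 : lam^k * ∑_{j0} ∏ update
      have hT2 : QC ψ (∑ j, m j + 1)
          (fun lam ξ => ∑ j0 : Fin k,
            lam ^ k * ∏ j, Function.update v j0 (pd i (v j0)) j ξ) := by
        apply QC.sum'
        intro j0 _
        have hb := QC.base (ψ := ψ) k (Function.update v j0 (pd i (v j0)))
          (Function.update m j0 (m j0 + 1))
          (fun j => by
            rcases eq_or_ne j j0 with h | h
            · rw [h]; simp
            · rw [Function.update_apply, if_neg h]; exact hm j)
          (fun j => by
            rcases eq_or_ne j j0 with h | h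
            · rw [h, Function.update_self, Function.update_self]
              exact (hv j0).pd' hψ i
            · rw [Function.update_apply, if_neg h, Function.update_apply, if_neg h]
              exact hv j)
        have hsum : ∑ j, Function.update m j0 (m j0 + 1) j = ∑ j, m j + 1 := by
          rw [Finset.sum_update_of_mem (Finset.mem_univ j0)]
          have := Finset.add_sum_erase Finset.univ m (Finset.mem_univ j0)
          rw [Finset.erase_eq] at this
          omega
        rwa [hsum] at hb
      have heq : (fun (lam : ℝ) (ξ : E) =>
            lam * pd i (uu ψ) ξ * (lam ^ k * ∏ j, v j ξ)
            + pd i (fun ν => lam ^ k * ∏ j, v j ν) ξ)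
          = fun lam ξ =>
            (lam ^ (k+1) * ∏ j, (Fin.cons (pd i (uu ψ)) v : Fin (k+1) → E → ℝ) j ξ)
            + ∑ j0 : Fin k, lam ^ k * ∏ j, Function.update v j0 (pd i (v j0)) j ξ := by
        funext lam ξ
        have hsm : ∀ j, Sm (v j) := fun j => (hv j).smooth hψ
        have hpdc : pd i (fun ν => lam ^ k * ∏ j, v j ν) ξ
            = lam ^ k * pd i (fun ν : E => ∏ j, v j ν) ξ :=
          pd_const_mul (lam ^ k) i ξ (Sm.diffAt (contDiff_prod fun j _ => hsm j) ξ)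
        rw [hpdc, pd_prod v hsm i ξ, prod_cons_apply, Finset.mul_sum]
        rw [pow_succ]
        ring
      rw [heq]
      exact QC.add hT1 hT2

end S2
namespace S2
variable {n : ℕ}
local notation "E" => EuclideanSpace ℝ (Fin n)
variable {ψ : ℝ → ℝ}

lemma contDiff_uu (hψ : ContDiff ℝ ((⊤:ℕ∞) : WithTop ℕ∞) ψ) : Sm (uu ψ (n := n)) :=
  hψ.comp contDiff_jb

lemma main_rep (hψ : ContDiff ℝ ((⊤:ℕ∞) : WithTop ℕ∞) ψ) (L : List (Fin n)) :
    ∃ q : ℝ → E → ℝ, QC ψ L.length q ∧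
      ∀ (lam : ℝ) (ξ : E), Dl L (fun ν => Real.exp (lam * ψ (jb ν))) ξ
        = Real.exp (lam * ψ (jb ξ)) * q lam ξ := by
  induction L with
  | nil =>
      refine ⟨fun lam ξ => lam ^ 0 * ∏ j : Fin 0, (Fin.elim0 j : E → ℝ) ξ, ?_, ?_⟩
      · have hb := QC.base (n := n) (ψ := ψ) 0 (Fin.elim0 : Fin 0 → EuclideanSpace ℝ (Fin n) → ℝ)
          (Fin.elim0 : Fin 0 → ℕ)
          (fun j => j.elim0) (fun j => j.elim0)
        simpa using hb
      · intro lam ξ; simp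
  | cons i L ih =>
      obtain ⟨q, hq, hrep⟩ := ih
      refine ⟨fun lam ξ => lam * pd i (uu ψ) ξ * q lam ξ + pd i (q lam) ξ, ?_, ?_⟩
      · have := hq.step hψ i
        simpa using this
      · intro lam ξ
        have hDl : Dl L (fun ν => Real.exp (lam * ψ (jb ν)))
            = fun ν => Real.exp (lam * uu ψ ν) * q lam ν := by
          funext ν; exact hrep lam ν
        rw [Dl_cons, hDl]
        -- derivative of the exponential factor
        have hu : Sm (uu ψ (n := n)) := contDiff_uu hψ
        have h2 : HasDerivAt (fun y : ℝ => lam * y) lam (uu ψ ξ) := by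
          simpa using (hasDerivAt_id (uu ψ ξ)).const_mul lam
        have hexp : HasDerivAt (fun y : ℝ => Real.exp (lam * y))
            (Real.exp (lam * uu ψ ξ) * lam) (uu ψ ξ) := by
          have := (Real.hasDerivAt_exp (lam * uu ψ ξ)).comp (uu ψ ξ) h2
          simpa [Function.comp_def] using this
        have hE : HasFDerivAt (fun ν : E => Real.exp (lam * uu ψ ν))
            ((Real.exp (lam * uu ψ ξ) * lam) • (fderiv ℝ (uu ψ) ξ)) ξ := by
          have := hexp.comp_hasFDerivAt ξ ((hu.diffAt ξ).hasFDerivAt)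
          simpa [Function.comp_def] using this
        have hpd := pd_mul i ξ hE.differentiableAt ((hq.smooth hψ lam).diffAt ξ)
        rw [hpd]
        have hpdE : pd i (fun ν : E => Real.exp (lam * uu ψ ν)) ξ
            = Real.exp (lam * uu ψ ξ) * lam * pd i (uu ψ) ξ := by
          rw [pd_eq hE i, ContinuousLinearMap.smul_apply, smul_eq_mul]
          rfl
        rw [hpdE]
        show Real.exp (lam * uu ψ ξ) * lam * pd i (uu ψ) ξ * q lam ξ
            + Real.exp (lam * uu ψ ξ) * pd i (q lam) ξ
          = Real.exp (lam * ψ (jb ξ)) * (lam * pd i (uu ψ) ξ * q lam ξ + pd i (q lam) ξ)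
        show Real.exp (lam * uu ψ ξ) * lam * pd i (uu ψ) ξ * q lam ξ
            + Real.exp (lam * uu ψ ξ) * pd i (q lam) ξ
          = Real.exp (lam * uu ψ ξ) * (lam * pd i (uu ψ) ξ * q lam ξ + pd i (q lam) ξ)
        ring

lemma Dl_append (A B : List (Fin n)) (f : E → ℝ) :
    Dl (A ++ B) f = Dl A (Dl B f) := by
  simp [Dl, List.foldr_append]

lemma Dl_replicate (k : ℕ) (i : Fin n) (f : E → ℝ) :
    Dl (List.replicate k i) f = (pd i)^[k] f := by
  induction k with
  | zero => rfl
  | succ k ih =>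
      rw [List.replicate_succ, Dl_cons, ih, Function.iterate_succ_apply']

lemma md_eq_Dl (γ : Fin n → ℕ) (f : E → ℝ) :
    md γ f = Dl ((List.finRange n).flatMap fun i => List.replicate (γ i) i) f := by
  rw [md]
  have key : ∀ l : List (Fin n),
      l.foldr (fun i g => (pd i)^[γ i] g) f
        = Dl (l.flatMap fun i => List.replicate (γ i) i) f := by
    intro l
    induction l with
    | nil => rfl
    | cons a l ih =>
        rw [List.foldr_cons, List.flatMap_cons, Dl_append, ih, Dl_replicate]
  exact key _

lemma len_flat (γ : Fin n → ℕ) :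
    ((List.finRange n).flatMap fun i => List.replicate (γ i) i).length = ∑ i, γ i := by
  rw [List.length_flatMap, Fin.sum_univ_def]
  congr 1
  simp [Function.comp]

end S2


/-- Estimate (2.12): derivative bounds for the exponential weight e^{λψ(⟨ξ⟩)},
with a constant independent of λ ≥ 1. -/
theorem stmt2 {n : ℕ} (ψ : ℝ → ℝ)
    (hψsmooth : ContDiff ℝ (⊤ : ℕ∞) ψ)
    (hψmono : MonotoneOn ψ (Set.Ici 1))
    (hψge : ∀ s : ℝ, 1 ≤ s → 1 ≤ ψ s)
    (hψder : ∀ k : ℕ, 1 ≤ k → ∃ C > 0, ∀ s : ℝ, 1 ≤ s →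
      |iteratedDeriv k ψ s| ≤ C * ψ s / s ^ k)
    (γ : Fin n → ℕ) :
    ∃ C > 0, ∀ lam : ℝ, 1 ≤ lam → ∀ ξ : EuclideanSpace ℝ (Fin n),
      |md γ (fun ν => Real.exp (lam * ψ (jb ν))) ξ|
        ≤ C * lam ^ (∑ i, γ i) * Real.exp (lam * ψ (jb ξ)) *
            (ψ (jb ξ) / jb ξ) ^ (∑ i, γ i) := by
  have hψ : ContDiff ℝ ((⊤:ℕ∞) : WithTop ℕ∞) ψ := hψsmooth.of_le (by simp)
  set L : List (Fin n) := (List.finRange n).flatMap fun i => List.replicate (γ i) i with hL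
  obtain ⟨q, hq, hrep⟩ := S2.main_rep hψ L
  obtain ⟨C, hC, hb⟩ := hq.bound hψge hψder
  refine ⟨C, hC, fun lam hlam ξ => ?_⟩
  have hlen : L.length = ∑ i, γ i := S2.len_flat γ
  set M : ℕ := ∑ i, γ i with hM
  rw [S2.md_eq_Dl γ _, ← hL, hrep lam ξ]
  have hbd := hb lam hlam ξ
  rw [hlen] at hbd
  have hexp : (0:ℝ) < Real.exp (lam * ψ (jb ξ)) := Real.exp_pos _
  have hjbM : (jb ξ : ℝ) ^ (M:ℕ) ≠ 0 := pow_ne_zero _ (S2.jb_ne ξ)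
  have hfrac : (ψ (jb ξ) / jb ξ) ^ M = ψ (jb ξ) ^ M * jb ξ ^ (-(M:ℤ)) := by
    rw [div_pow, zpow_neg, zpow_natCast, div_eq_mul_inv]
  rw [abs_mul, abs_of_pos hexp, hfrac]
  calc Real.exp (lam * ψ (jb ξ)) * |q lam ξ|
      ≤ Real.exp (lam * ψ (jb ξ)) * (C * (lam ^ M * (ψ (jb ξ) ^ M * jb ξ ^ (-(M:ℤ))))) :=
        mul_le_mul_of_nonneg_left hbd hexp.le
  _ = C * lam ^ M * Real.exp (lam * ψ (jb ξ)) * (ψ (jb ξ) ^ M * jb ξ ^ (-(M:ℤ))) := by ring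
end
end

section
/- Let μ be a modulus of continuity, let T > 0, and let φ ∈ C_c^∞(ℝ) satisfy φ ≥ 0, ∫_ℝ φ = 1 and supp φ ⊆ [−1, 1]. Let τ_1, …, τ_m : [−1, T+1] × ℝ^n × {ξ ∈ ℝ^n : |ξ| ≥ 1} → ℝ be continuous functions such that: (a) there are constants L > 0 with |τ_j(t, x, ξ)| ≤ L ⟨ξ⟩ and |τ_j(t, x, ξ) − τ_j(s, x, ξ)| ≤ L μ(|t−s|) ⟨ξ⟩ for all j, all |t−s| ≤ 1, x ∈ ℝ^n, |ξ| ≥ 1; (b) there is c > 0 with τ_j(t, x, ξ) − τ_i(t, x, ξ) ≥ c |ξ| whenever 1 ≤ i < j ≤ m. Define λ_j(t, x, ξ) = ∫_{−1}^{1} τ_j(t − ⟨ξ⟩^{−1} r, x, ξ) φ(r) dr. Then there exist constants C > 0 and M ≥ 1 such that λ_j(t, x, ξ) − λ_i(t, x, ξ) ≥ C ⟨ξ⟩ for all 1 ≤ i < j ≤ m, all t ∈ [0, T], all x ∈ ℝ^n and all |ξ| ≥ M. -/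
noncomputable section

open Real Set Filter MeasureTheory

/-- Proposition 4.3 (iii): the regularized roots inherit the strict hyperbolicity gap,
λ_j − λ_i ≥ C⟨ξ⟩ for i < j and |ξ| large. -/
theorem stmt7 {n m : ℕ} (μ : ℝ → ℝ)
    (hμcont : ContinuousOn μ (Set.Icc 0 1))
    (hμconc : ConcaveOn ℝ (Set.Icc 0 1) μ)
    (hμmono : MonotoneOn μ (Set.Icc 0 1))
    (hμ0 : μ 0 = 0)
    (hμmap : ∀ s ∈ Set.Icc (0:ℝ) 1, μ s ∈ Set.Icc (0:ℝ) 1)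
    (T : ℝ) (hT : 0 < T)
    (φ : ℝ → ℝ) (hφsmooth : ContDiff ℝ (⊤ : ℕ∞) φ) (hφcpt : HasCompactSupport φ)
    (hφnn : ∀ r, 0 ≤ φ r) (hφint : ∫ r : ℝ, φ r = 1)
    (hφsupp : Function.support φ ⊆ Set.Icc (-1) 1)
    (τ : Fin m → ℝ → EuclideanSpace ℝ (Fin n) → EuclideanSpace ℝ (Fin n) → ℝ)
    (hτcont : ∀ j x ξ, ContinuousOn (fun t => τ j t x ξ) (Set.Icc (-1) (T + 1)))
    (L : ℝ) (hL : 0 < L)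
    (hτbd : ∀ j, ∀ t ∈ Set.Icc (-1:ℝ) (T + 1), ∀ x ξ, 1 ≤ ‖ξ‖ →
      |τ j t x ξ| ≤ L * jb ξ)
    (hτμ : ∀ j, ∀ t ∈ Set.Icc (-1:ℝ) (T + 1), ∀ s ∈ Set.Icc (-1:ℝ) (T + 1),
      |t - s| ≤ 1 → ∀ x ξ, 1 ≤ ‖ξ‖ →
      |τ j t x ξ - τ j s x ξ| ≤ L * μ |t - s| * jb ξ)
    (c : ℝ) (hc : 0 < c)
    (hgap : ∀ i j : Fin m, i < j → ∀ t ∈ Set.Icc (-1:ℝ) (T + 1), ∀ x ξ, 1 ≤ ‖ξ‖ →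
      c * ‖ξ‖ ≤ τ j t x ξ - τ i t x ξ)
    (lam : Fin m → ℝ → EuclideanSpace ℝ (Fin n) → EuclideanSpace ℝ (Fin n) → ℝ)
    (hlam : ∀ j t x ξ, lam j t x ξ = ∫ r in (-1:ℝ)..1, τ j (t - (jb ξ)⁻¹ * r) x ξ * φ r) :
    ∃ C > 0, ∃ M : ℝ, 1 ≤ M ∧ ∀ i j : Fin m, i < j → ∀ t ∈ Set.Icc (0:ℝ) T,
      ∀ x ξ, M ≤ ‖ξ‖ → C * jb ξ ≤ lam j t x ξ - lam i t x ξ := by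
  refine ⟨c / 2, by positivity, 1, le_refl 1, ?_⟩
  intro i j hij t ht x ξ hξ
  have hjb1 : (1 : ℝ) ≤ jb ξ := by
    have h := Real.sqrt_le_sqrt (show (1:ℝ) ≤ 1 + ‖ξ‖ ^ 2 by nlinarith [sq_nonneg ‖ξ‖])
    simpa [jb] using h
  have hjb0 : (0 : ℝ) < jb ξ := lt_of_lt_of_le one_pos hjb1
  have hinv : (jb ξ)⁻¹ ≤ 1 := inv_le_one_of_one_le₀ hjb1
  have hinvpos : 0 < (jb ξ)⁻¹ := inv_pos.mpr hjb0
  have hmaps : ∀ r ∈ Set.Icc (-1:ℝ) 1, t - (jb ξ)⁻¹ * r ∈ Set.Icc (-1:ℝ) (T + 1) := by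
    intro r hr
    have hra : |r| ≤ 1 := abs_le.mpr ⟨hr.1, hr.2⟩
    have h1 : |(jb ξ)⁻¹ * r| ≤ 1 := by
      rw [abs_mul, abs_of_pos hinvpos]
      calc (jb ξ)⁻¹ * |r| ≤ 1 * 1 :=
            mul_le_mul hinv hra (abs_nonneg r) zero_le_one
        _ = 1 := one_mul 1
    have h2 := abs_le.mp h1
    exact ⟨by linarith [ht.1, h2.2], by linarith [ht.2, h2.1]⟩
  have hcontf : ∀ k : Fin m,
      ContinuousOn (fun r => τ k (t - (jb ξ)⁻¹ * r) x ξ * φ r) (Set.Icc (-1:ℝ) 1) := by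
    intro k
    apply ContinuousOn.mul
    · exact (hτcont k x ξ).comp (by fun_prop) hmaps
    · exact hφsmooth.continuous.continuousOn
  have hint : ∀ k : Fin m,
      IntervalIntegrable (fun r => τ k (t - (jb ξ)⁻¹ * r) x ξ * φ r) volume (-1) 1 :=
    fun k => (hcontf k).intervalIntegrable_of_Icc (by norm_num)
  have hintc : IntervalIntegrable (fun r => c * ‖ξ‖ * φ r) volume (-1) 1 :=
    ((continuous_const.mul hφsmooth.continuous).intervalIntegrable _ _)
  have hφIcc : ∫ r in (-1:ℝ)..1, φ r = 1 := by
    rw [intervalIntegral.integral_of_le (by norm_num : (-1:ℝ) ≤ 1),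
      ← MeasureTheory.integral_Icc_eq_integral_Ioc,
      MeasureTheory.setIntegral_eq_integral_of_forall_compl_eq_zero]
    · exact hφint
    · intro r hr
      by_contra h
      exact hr (hφsupp h)
  have key : ∫ r in (-1:ℝ)..1, c * ‖ξ‖ * φ r ≤ lam j t x ξ - lam i t x ξ := by
    rw [hlam, hlam, ← intervalIntegral.integral_sub (hint j) (hint i)]
    apply intervalIntegral.integral_mono_on (by norm_num) hintc ((hint j).sub (hint i))
    intro r hr
    have hs := hmaps r hr
    have hgap' := hgap i j hij _ hs x ξ hξ
    have hφr := hφnn r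
    nlinarith [hgap', hφr]
  have hconst : ∫ r in (-1:ℝ)..1, c * ‖ξ‖ * φ r = c * ‖ξ‖ := by
    rw [intervalIntegral.integral_const_mul, hφIcc, mul_one]
  have hjb2 : jb ξ ≤ 2 * ‖ξ‖ := by
    rw [jb]
    have h : 1 + ‖ξ‖ ^ 2 ≤ (2 * ‖ξ‖) ^ 2 := by nlinarith
    calc Real.sqrt (1 + ‖ξ‖ ^ 2) ≤ Real.sqrt ((2 * ‖ξ‖) ^ 2) := Real.sqrt_le_sqrt h
      _ = 2 * ‖ξ‖ := Real.sqrt_sq (by nlinarith [sq_nonneg ‖ξ‖])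
  nlinarith [key, hconst, hjb2]
end
end

section
/- Let m ≥ 2 be an integer and ε > 0. Then there exist constants C > 0, δ₀ > 0 and R ≥ 1 such that for all ξ ∈ ℝ^n with |ξ| ≥ R (in particular large enough that log^{[m]}(⟨ξ⟩) ≥ 1) one has inf_{p ∈ ℕ, p ≥ 1} p^{p²} ⟨ξ⟩^{−p} ≤ C · exp( −δ₀ · log(⟨ξ⟩) · (log^{[m]}(⟨ξ⟩))^{1+ε} ). -/
noncomputable section

open Real Set Filter MeasureTheory

/-- Iterated logarithm: log^[1] = log, log^[m] = log ∘ log^[m-1]. -/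
def iterLog : ℕ → ℝ → ℝ
  | 0, s => s
  | m + 1, s => iterLog m (Real.log s)

/-!
Put `s = ⟨ξ⟩`, `L = log s` and take `p + 1 = q = ⌈√L⌉`. Then `q^{q²} s^{-q} = exp (q² log q - q L)`
with `q² log q ≤ 4 L log L` and `q L ≥ L √L`, while `log^[m] s ≤ log L` since `m ≥ 2`. So with
`C = δ₀ = 1` everything reduces to `4 log L + (log L)^{1+ε} ≤ √L`, true for large `L`. Lower bounds
of the form `exp^[k] a ≤ s` keep the iterated logarithms in the range where they are monotone.
-/

lemma exp_iterate_le_log {k : ℕ} {a u : ℝ} (h : exp^[k + 1] a ≤ u) : exp^[k] a ≤ log u := by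
  rw [Function.iterate_succ_apply'] at h
  exact (le_log_iff_exp_le ((exp_pos _).trans_le h)).2 h

lemma le_iterLog_of_exp_iterate_le {k : ℕ} {a u : ℝ} (h : exp^[k] a ≤ u) :
    a ≤ iterLog k u := by
  induction k generalizing u with
  | zero => exact h
  | succ k ih => exact ih (exp_iterate_le_log h)

lemma iterLog_le_self_of_exp_iterate_le {k : ℕ} {a u : ℝ} (h : exp^[k] a ≤ u) :
    iterLog k u ≤ u := by
  induction k generalizing u with
  | zero => exact le_rfl
  | succ k ih =>
    have hu : 0 < u := by
      rw [Function.iterate_succ_apply'] at h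
      exact (exp_pos _).trans_le h
    exact (ih (exp_iterate_le_log h)).trans (log_le_self hu.le)

lemma iterLog_le_iterLog_of_exp_iterate_le {j k : ℕ} (hjk : j ≤ k) {a u : ℝ}
    (h : exp^[k] a ≤ u) : iterLog k u ≤ iterLog j u := by
  induction j generalizing k u with
  | zero => exact iterLog_le_self_of_exp_iterate_le h
  | succ j ih =>
    obtain ⟨k, rfl⟩ : ∃ k', k = k' + 1 := ⟨k - 1, by omega⟩
    exact ih (by omega) (exp_iterate_le_log h)

lemma norm_le_jb {n : ℕ} (ξ : EuclideanSpace ℝ (Fin n)) : ‖ξ‖ ≤ jb ξ :=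
  le_sqrt_of_sq_le (by linarith)

lemma eventually_four_mul_log_add_log_rpow_le_sqrt (r : ℝ) :
    ∀ᶠ L in atTop, 4 * log L + log L ^ r ≤ √L := by
  have h := ((isLittleO_log_rpow_atTop one_half_pos).const_mul_left 4).add
    (isLittleO_log_rpow_rpow_atTop r one_half_pos)
  filter_upwards [h.bound one_pos, eventually_ge_atTop 0] with L hL hL0
  rw [one_mul, norm_of_nonneg (rpow_nonneg hL0 _), ← sqrt_eq_rpow] at hL
  exact (le_abs_self _).trans hL

lemma natCast_pow_sq_mul_inv_pow {q : ℕ} (hq : 0 < q) {s : ℝ} (hs : 0 < s) :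
    (q : ℝ) ^ (q ^ 2) * s⁻¹ ^ q = exp ((q : ℝ) ^ 2 * log q - q * log s) := by
  rw [exp_sub, ← log_rpow (by positivity), ← log_rpow hs, exp_log (by positivity),
    exp_log (by positivity), inv_pow, div_eq_mul_inv]
  norm_cast

lemma iInf_le_natCast_pow_sq_mul_inv_pow {q : ℕ} (hq : 0 < q) {s : ℝ} (hs : 0 < s) :
    ⨅ p : ℕ, (((p + 1 : ℕ) : ℝ) ^ ((p + 1) ^ 2) * s⁻¹ ^ (p + 1)) ≤
      (q : ℝ) ^ (q ^ 2) * s⁻¹ ^ q := by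
  obtain ⟨p, rfl⟩ := Nat.exists_eq_add_of_le' hq
  exact ciInf_le ⟨0, by rintro _ ⟨p, rfl⟩; positivity⟩ p

lemma ceil_sqrt_sq_mul_log_add_le {L M r : ℝ} (hL : 4 ≤ L) (hM0 : 0 ≤ M) (hM : M ≤ log L)
    (hr : 0 ≤ r) (hgrowth : 4 * log L + log L ^ r ≤ √L) :
    (⌈√L⌉₊ : ℝ) ^ 2 * log ⌈√L⌉₊ + L * M ^ r ≤ ⌈√L⌉₊ * L := by
  set q := ⌈√L⌉₊
  have hsq : √L ^ 2 = L := sq_sqrt (by linarith)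
  have h2 : 2 ≤ √L := le_sqrt_of_sq_le (by linarith)
  have hq : √L ≤ q := Nat.le_ceil _
  have hq2 : (q : ℝ) ≤ 2 * √L := Nat.ceil_le_two_mul (by linarith)
  have hqL : (q : ℝ) ≤ L := by nlinarith
  calc (q : ℝ) ^ 2 * log q + L * M ^ r ≤ 4 * L * log L + L * log L ^ r := by
        gcongr
        · nlinarith
    _ = L * (4 * log L + log L ^ r) := by ring
    _ ≤ L * √L := by gcongr
    _ ≤ q * L := by rw [mul_comm]; gcongr

/-- Example 3.5: the weight sequence K_p = p^{p²} is compatible with the weight function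
η(s) = log(s) (log^[m](s))^{1+ε}. -/
theorem stmt10 {n : ℕ} (m : ℕ) (hm : 2 ≤ m) (ε : ℝ) (hε : 0 < ε) :
    ∃ C > 0, ∃ δ₀ > 0, ∃ R : ℝ, 1 ≤ R ∧ ∀ ξ : EuclideanSpace ℝ (Fin n), R ≤ ‖ξ‖ →
      1 ≤ iterLog m (jb ξ) ∧
      (⨅ p : ℕ, (((p + 1 : ℕ) : ℝ) ^ ((p + 1) ^ 2) * (jb ξ)⁻¹ ^ (p + 1)))
        ≤ C * Real.exp (-δ₀ * (Real.log (jb ξ) * (iterLog m (jb ξ)) ^ (1 + ε))) := by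
  obtain ⟨L₀, hL₀⟩ := ((eventually_four_mul_log_add_log_rpow_le_sqrt (1 + ε)).and
    (eventually_ge_atTop 4)).exists_forall_of_atTop
  have hid : id ≤ exp := fun x => show x ≤ exp x by linarith [add_one_le_exp x]
  refine ⟨1, one_pos, 1, one_pos, max (exp L₀) (exp^[m] 1),
    le_max_of_le_right (Function.id_le_iterate_of_id_le hid m 1), fun ξ hξ => ?_⟩
  set s := jb ξ
  have hs : max (exp L₀) (exp^[m] 1) ≤ s := hξ.trans (norm_le_jb ξ)
  have hs0 : 0 < s := (exp_pos _).trans_le ((le_max_left _ _).trans hs)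
  obtain ⟨hgrowth, hL⟩ := hL₀ (log s) ((le_log_iff_exp_le hs0).2 ((le_max_left _ _).trans hs))
  have hM1 : 1 ≤ iterLog m s := le_iterLog_of_exp_iterate_le ((le_max_right _ _).trans hs)
  have hM : iterLog m s ≤ log (log s) :=
    iterLog_le_iterLog_of_exp_iterate_le hm ((le_max_right _ _).trans hs)
  have hq : 0 < ⌈√(log s)⌉₊ := Nat.ceil_pos.2 (sqrt_pos.2 (by linarith))
  refine ⟨hM1, ?_⟩
  calc _ ≤ _ := iInf_le_natCast_pow_sq_mul_inv_pow hq hs0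
    _ = _ := natCast_pow_sq_mul_inv_pow hq hs0
    _ ≤ 1 * exp (-1 * (log s * iterLog m s ^ (1 + ε))) := by
      rw [one_mul, exp_le_exp]
      linarith [ceil_sqrt_sq_mul_log_add_le hL (by linarith) hM (by linarith) hgrowth]
end
end

section
/- Let m ≥ 2 be an integer and ε > 0, and define η(s) = log(s) · (log^{[m]}(s))^{1+ε} for s large enough that log^{[m]}(s) > 0. Then for every integer k ≥ 1 there exist constants C_k > 0 and s_k ≥ 1 such that |η^{(k)}(s)| ≤ C_k s^{−k} η(s) for all s ≥ s_k. -/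
/-! Write `Lⱼ = log^[j]`. Every real power satisfies `(Lⱼ^a)' = Lⱼ^a · r` with
`r = a / (L₀ L₁ ⋯ Lⱼ) = O(1/s)`, and `r` is a product of the functions `Lᵢ⁻¹ = Lᵢ^(-1)`.
So one proves by induction on `k`, simultaneously for all `j` and `a`, that the first `k`
derivatives of `Lⱼ^a` obey `sⁱ (Lⱼ^a)⁽ⁱ⁾ = O(Lⱼ^a)`: the induction hypothesis gives the same
for `r` with weight `1/s`, and Leibniz' rule applied to `(Lⱼ^a)⁽ᵏ⁺¹⁾ = (Lⱼ^a · r)⁽ᵏ⁾` gives the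
next derivative. Then `η = L₁ · Lₘ^(1+ε)` is a product of two such functions. -/

noncomputable section

open Real Set Filter MeasureTheory

open Asymptotics Topology Finset

lemma Filter.Eventually.eventually_nhds_of_atTop {α : Type*} [LinearOrder α] [TopologicalSpace α]
    [OrderTopology α] [NoMaxOrder α] [Nonempty α] {p : α → Prop} (h : ∀ᶠ s in atTop, p s) :
    ∀ᶠ s in atTop, ∀ᶠ y in 𝓝 s, p y := by
  obtain ⟨a, ha⟩ := eventually_atTop.1 h
  filter_upwards [eventually_gt_atTop a] with s hs
  filter_upwards [Ioi_mem_nhds hs] with y hy using ha y hy.le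

lemma Filter.EventuallyEq.iteratedDeriv_atTop {F : Type*} [NormedAddCommGroup F]
    [NormedSpace ℝ F] {f g : ℝ → F} (h : f =ᶠ[atTop] g) (n : ℕ) :
    iteratedDeriv n f =ᶠ[atTop] iteratedDeriv n g := by
  filter_upwards [Eventually.eventually_nhds_of_atTop h] with s hs
  exact EventuallyEq.iteratedDeriv_eq n hs

/-- The symbol estimates `|f⁽ʲ⁾(s)| ≤ C M(s) / sʲ` for large `s` and all `j ≤ k`. -/
def SymbolEstimate (k : ℕ) (f M : ℝ → ℝ) : Prop :=
  ∀ j ≤ k, (fun s => s ^ j * iteratedDeriv j f s) =O[atTop] M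

namespace SymbolEstimate

variable {k : ℕ} {f g M N : ℝ → ℝ}

lemma zero_self (f : ℝ → ℝ) : SymbolEstimate 0 f f := by
  intro j hj
  obtain rfl : j = 0 := by omega
  simpa using isBigO_refl f atTop

lemma trans_isBigO (h : SymbolEstimate k f M) (hMN : M =O[atTop] N) : SymbolEstimate k f N :=
  fun j hj => (h j hj).trans hMN

lemma const_mul (h : SymbolEstimate k f M) (c : ℝ) : SymbolEstimate k (fun s => c * f s) M := by
  intro j hj
  simp only [iteratedDeriv_const_mul_field]
  exact ((h j hj).const_mul_left c).congr_left fun s => by ring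

lemma one : SymbolEstimate k (fun _ => 1) (fun _ => 1) := by
  intro j _
  rcases j with _ | j
  · simpa using isBigO_refl (fun _ : ℝ => (1 : ℝ)) atTop
  · simpa [iteratedDeriv_const] using
      (isBigO_zero _ _ : (fun _ : ℝ => (0 : ℝ)) =O[atTop] fun _ => (1 : ℝ))

lemma mul (hf : ∀ᶠ s in atTop, ContDiffAt ℝ k f s) (hg : ∀ᶠ s in atTop, ContDiffAt ℝ k g s)
    (hF : SymbolEstimate k f M) (hG : SymbolEstimate k g N) :
    SymbolEstimate k (fun s => f s * g s) (fun s => M s * N s) := by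
  intro j hj
  have hleibniz : (fun s => s ^ j * iteratedDeriv j (fun s => f s * g s) s) =ᶠ[atTop]
      fun s => ∑ i ∈ range (j + 1), (j.choose i : ℝ) *
        ((s ^ i * iteratedDeriv i f s) * (s ^ (j - i) * iteratedDeriv (j - i) g s)) := by
    filter_upwards [hf, hg] with s hfs hgs
    rw [iteratedDeriv_fun_mul (hfs.of_le (mod_cast hj)) (hgs.of_le (mod_cast hj)), mul_sum]
    refine sum_congr rfl fun i hi => ?_
    rw [← pow_mul_pow_sub s (mem_range_succ_iff.1 hi)]
    ring
  refine (IsBigO.fun_sum fun i hi => ?_).congr' hleibniz.symm EventuallyEq.rfl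
  have hij := mem_range_succ_iff.1 hi
  exact ((hF i (hij.trans hj)).mul (hG (j - i) ((j.sub_le i).trans hj))).const_mul_left _

lemma prod {ι : Type*} {t : Finset ι} {f M : ι → ℝ → ℝ}
    (hf : ∀ i ∈ t, ∀ᶠ s in atTop, ContDiffAt ℝ k (f i) s)
    (hF : ∀ i ∈ t, SymbolEstimate k (f i) (M i)) :
    SymbolEstimate k (fun s => ∏ i ∈ t, f i s) (fun s => ∏ i ∈ t, M i s) := by
  classical
  induction t using Finset.induction_on with
  | empty => simpa using one
  | insert i t hi ih =>
    simp only [prod_insert hi]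
    have hft : ∀ᶠ s in atTop, ContDiffAt ℝ k (fun s => ∏ i ∈ t, f i s) s := by
      filter_upwards [(eventually_all_finset t).2 fun i hi => hf i (mem_insert_of_mem hi)]
        with s hs using contDiffAt_prod hs
    exact (hF i (mem_insert_self i t)).mul (hf i (mem_insert_self i t)) hft
      (ih (fun j hj => hf j (mem_insert_of_mem hj)) fun j hj => hF j (mem_insert_of_mem hj))

lemma succ_of_deriv_eq_mul {r : ℝ → ℝ} (hf : ∀ᶠ s in atTop, ContDiffAt ℝ (k + 1) f s)
    (hr : ∀ᶠ s in atTop, ContDiffAt ℝ k r s) (hfr : deriv f =ᶠ[atTop] fun s => f s * r s)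
    (hF : SymbolEstimate k f f) (hR : SymbolEstimate k r fun s => s⁻¹) :
    SymbolEstimate (k + 1) f f := by
  intro j hj
  rcases Nat.le_succ_iff.1 hj with hj | rfl
  · exact hF j hj
  have hfk : ∀ᶠ s in atTop, ContDiffAt ℝ k f s :=
    hf.mono fun s hs => hs.of_le (mod_cast k.le_succ)
  have hprod := hF.mul hfk hr hR k le_rfl
  have hshift : (fun s => s * (s ^ k * iteratedDeriv k (fun s => f s * r s) s)) =ᶠ[atTop]
      fun s => s ^ (k + 1) * iteratedDeriv (k + 1) f s := by
    filter_upwards [hfr.iteratedDeriv_atTop k] with s hs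
    rw [iteratedDeriv_succ', hs]
    ring
  refine ((isBigO_refl (fun s : ℝ => s) atTop).mul hprod).congr' hshift ?_
  filter_upwards [eventually_ne_atTop 0] with s hs
  field_simp

lemma exists_abs_iteratedDeriv_le (h : SymbolEstimate k f M) (hM : ∀ᶠ s in atTop, 0 ≤ M s) :
    ∃ C > 0, ∃ s₀ : ℝ, 1 ≤ s₀ ∧ ∀ s : ℝ, s₀ ≤ s → |iteratedDeriv k f s| ≤ C * M s / s ^ k := by
  obtain ⟨C, hC, hCk⟩ := (h k le_rfl).exists_pos
  obtain ⟨s₀, hs₀⟩ := eventually_atTop.1 (hCk.bound.and (hM.and (eventually_gt_atTop 0)))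
  refine ⟨C, hC, max s₀ 1, le_max_right _ _, fun s hs => ?_⟩
  obtain ⟨hbound, hMs, hs⟩ := hs₀ s (le_of_max_le_left hs)
  simp only [norm_mul, norm_pow, Real.norm_eq_abs, abs_of_pos hs, abs_of_nonneg hMs] at hbound
  rw [le_div_iff₀ (by positivity)]
  linarith

end SymbolEstimate

lemma iterLog_succ_apply' (m : ℕ) (s : ℝ) : iterLog (m + 1) s = Real.log (iterLog m s) := by
  induction m generalizing s with
  | zero => rfl
  | succ m ih => exact ih (Real.log s)

lemma tendsto_iterLog_atTop (j : ℕ) : Tendsto (iterLog j) atTop atTop := by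
  induction j with
  | zero => exact tendsto_id
  | succ j ih => exact ih.comp Real.tendsto_log_atTop

lemma eventually_contDiffAt_iterLog (n : WithTop ℕ∞) (j : ℕ) :
    ∀ᶠ s in atTop, ContDiffAt ℝ n (iterLog j) s := by
  induction j with
  | zero => exact .of_forall fun _ => contDiffAt_id
  | succ j ih =>
    filter_upwards [ih, (tendsto_iterLog_atTop j).eventually_gt_atTop 0] with s hs hpos
    rw [funext (iterLog_succ_apply' j)]
    exact (Real.contDiffAt_log.2 hpos.ne').comp s hs

lemma eventually_hasDerivAt_iterLog (j : ℕ) :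
    ∀ᶠ s in atTop, HasDerivAt (iterLog j) (∏ i ∈ range j, (iterLog i s)⁻¹) s := by
  induction j with
  | zero => exact .of_forall fun s => by rw [prod_range_zero]; exact hasDerivAt_id s
  | succ j ih =>
    filter_upwards [ih, (tendsto_iterLog_atTop j).eventually_gt_atTop 0] with s hs hpos
    rw [funext (iterLog_succ_apply' j), prod_range_succ]
    exact (Real.hasDerivAt_log hpos.ne').comp s hs |>.congr_deriv (mul_comm _ _)

lemma eventually_contDiffAt_rpow_iterLog (n : WithTop ℕ∞) (j : ℕ) (a : ℝ) :
    ∀ᶠ s in atTop, ContDiffAt ℝ n (fun s => iterLog j s ^ a) s := by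
  filter_upwards [eventually_contDiffAt_iterLog n j,
    (tendsto_iterLog_atTop j).eventually_gt_atTop 0] with s hs hpos
  exact hs.rpow_const_of_ne hpos.ne'

lemma isBigO_prod_inv_iterLog (j : ℕ) :
    (fun s => ∏ i ∈ range (j + 1), (iterLog i s)⁻¹) =O[atTop] fun s => s⁻¹ := by
  refine .of_bound' ?_
  filter_upwards [(eventually_all_finset (range j)).2
    fun i _ => (tendsto_iterLog_atTop (i + 1)).eventually_ge_atTop 1] with s hs
  rw [norm_prod, prod_range_succ']
  refine mul_le_of_le_one_left (norm_nonneg _)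
    (prod_le_one (fun _ _ => norm_nonneg _) fun i hi => ?_)
  rw [norm_inv, Real.norm_of_nonneg (zero_le_one.trans (hs i hi))]
  exact inv_le_one_of_one_le₀ (hs i hi)

lemma symbolEstimate_rpow_iterLog (k j : ℕ) (a : ℝ) :
    SymbolEstimate k (fun s => iterLog j s ^ a) (fun s => iterLog j s ^ a) := by
  induction k generalizing j a with
  | zero => exact .zero_self _
  | succ k ih =>
    have hinv : ∀ i, SymbolEstimate k (fun s => (iterLog i s)⁻¹) (fun s => (iterLog i s)⁻¹) := by
      simpa only [Real.rpow_neg_one] using fun i => ih i (-1)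
    have hinv_smooth : ∀ i, ∀ᶠ s in atTop, ContDiffAt ℝ k (fun s => (iterLog i s)⁻¹) s := by
      simpa only [Real.rpow_neg_one] using fun i => eventually_contDiffAt_rpow_iterLog k i (-1)
    set r : ℝ → ℝ := fun s => a * ∏ i ∈ range (j + 1), (iterLog i s)⁻¹
    have hr : SymbolEstimate k r fun s => s⁻¹ :=
      ((SymbolEstimate.prod (fun i _ => hinv_smooth i) fun i _ => hinv i).const_mul a).trans_isBigO
        (isBigO_prod_inv_iterLog j)
    have hr_smooth : ∀ᶠ s in atTop, ContDiffAt ℝ k r s := by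
      filter_upwards [(eventually_all_finset (range (j + 1))).2 fun i _ => hinv_smooth i]
        with s hs using contDiffAt_const.mul (contDiffAt_prod hs)
    have hderiv : deriv (fun s => iterLog j s ^ a) =ᶠ[atTop] fun s => iterLog j s ^ a * r s := by
      filter_upwards [eventually_hasDerivAt_iterLog j,
        (tendsto_iterLog_atTop j).eventually_gt_atTop 0] with s hs hpos
      rw [(hs.rpow_const (Or.inl hpos.ne')).deriv, Real.rpow_sub_one hpos.ne']
      simp only [r, prod_range_succ]
      field_simp
    exact (ih j a).succ_of_deriv_eq_mul (eventually_contDiffAt_rpow_iterLog _ j a) hr_smooth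
      hderiv hr

theorem stmt12_general (m : ℕ) (ε : ℝ) :
    ∀ k : ℕ, 1 ≤ k → ∃ C > 0, ∃ s₀ : ℝ, 1 ≤ s₀ ∧ ∀ s : ℝ, s₀ ≤ s →
      |iteratedDeriv k (fun s' => Real.log s' * (iterLog m s') ^ (1 + ε)) s|
        ≤ C * (Real.log s * (iterLog m s) ^ (1 + ε)) / s ^ k := by
  intro k _
  have hη := (symbolEstimate_rpow_iterLog k 1 1).mul (eventually_contDiffAt_rpow_iterLog _ 1 1)
    (eventually_contDiffAt_rpow_iterLog _ m (1 + ε)) (symbolEstimate_rpow_iterLog k m (1 + ε))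
  simp only [Real.rpow_one] at hη
  refine hη.exists_abs_iteratedDeriv_le ?_
  filter_upwards [eventually_ge_atTop 1, (tendsto_iterLog_atTop m).eventually_ge_atTop 0]
    with s hs hm
  exact mul_nonneg (Real.log_nonneg hs) (Real.rpow_nonneg hm _)

/-- Example 3.5: the weight function η(s) = log(s)(log^[m](s))^{1+ε} satisfies
the derivative bounds |η^{(k)}(s)| ≤ C_k s^{−k} η(s) for large s. -/
theorem stmt12 (m : ℕ) (hm : 2 ≤ m) (ε : ℝ) (hε : 0 < ε) :
    ∀ k : ℕ, 1 ≤ k → ∃ C > 0, ∃ s₀ : ℝ, 1 ≤ s₀ ∧ ∀ s : ℝ, s₀ ≤ s →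
      |iteratedDeriv k (fun s' => Real.log s' * (iterLog m s') ^ (1 + ε)) s|
        ≤ C * (Real.log s * (iterLog m s) ^ (1 + ε)) / s ^ k :=
  stmt12_general m ε
end
end

section
/- Let κ ∈ (0, 1) and define η(s) = s · (log(s) + 1)^{−κ} for s ≥ 1. Then there exists S ≥ 1 such that for all ξ, ζ ∈ ℝ^n with ⟨ξ⟩ ≥ S and ⟨ζ⟩ ≥ S one has η(⟨ξ+ζ⟩) ≤ η(⟨ξ⟩) + η(⟨ζ⟩). -/
/-!
Take `S = 1`. Write `η(s) = logWeight κ s = s (log s + 1)^(-κ)`. The bracket is subadditive,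
`⟨ξ + ζ⟩ ≤ ⟨ξ⟩ + ⟨ζ⟩`, since `√(1 + a²) √(1 + b²) ≥ ab`. Next, `η` is nondecreasing on `[1, ∞)`:
for `1 ≤ s ≤ t`, with `u = log s + 1 ≤ v = log t + 1`, we get `(v / u)^κ ≤ v / u ≤ t / s`; the first
step uses `κ ≤ 1` and the second `log (t / s) ≤ t / s - 1`. Finally `η(a + b) ≤ η(a) + η(b)`, because
the factor `(log s + 1)^(-κ)` is nonincreasing.
-/

noncomputable section

open Real Set Filter MeasureTheory

lemma sqrt_one_add_sq_add_le {a b : ℝ} (ha : 0 ≤ a) (hb : 0 ≤ b) :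
    √(1 + (a + b) ^ 2) ≤ √(1 + a ^ 2) + √(1 + b ^ 2) := by
  have hA : a ≤ √(1 + a ^ 2) := (le_sqrt ha (by positivity)).2 (by linarith)
  have hB : b ≤ √(1 + b ^ 2) := (le_sqrt hb (by positivity)).2 (by linarith)
  rw [sqrt_le_iff]
  refine ⟨by positivity, ?_⟩
  nlinarith [sq_sqrt (show 0 ≤ 1 + a ^ 2 by positivity),
    sq_sqrt (show 0 ≤ 1 + b ^ 2 by positivity), mul_le_mul hA hB hb (ha.trans hA)]

lemma jb_add_le {n : ℕ} (ξ ζ : EuclideanSpace ℝ (Fin n)) : jb (ξ + ζ) ≤ jb ξ + jb ζ :=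
  calc jb (ξ + ζ) ≤ √(1 + (‖ξ‖ + ‖ζ‖) ^ 2) := by
        unfold jb; gcongr; exact norm_add_le ξ ζ
    _ ≤ jb ξ + jb ζ := sqrt_one_add_sq_add_le (norm_nonneg ξ) (norm_nonneg ζ)

def logWeight (κ s : ℝ) : ℝ := s * (Real.log s + 1) ^ (-κ)

lemma mul_log_add_one_le {s t : ℝ} (hs : 1 ≤ s) (hst : s ≤ t) :
    s * (Real.log t + 1) ≤ t * (Real.log s + 1) := by
  have hs0 : 0 < s := by linarith
  have hlog : Real.log t - Real.log s ≤ t / s - 1 := by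
    rw [← log_div (by linarith) hs0.ne']
    exact log_le_sub_one_of_pos (div_pos (by linarith) hs0)
  have hscaled : s * (Real.log t - Real.log s) ≤ t - s := by
    calc s * (Real.log t - Real.log s) ≤ s * (t / s - 1) := by gcongr
      _ = t - s := by field_simp
  nlinarith [mul_nonneg (sub_nonneg.2 hst) (log_nonneg hs)]

lemma logWeight_monotoneOn {κ : ℝ} (hκ : κ ≤ 1) : MonotoneOn (logWeight κ) (Ici 1) := by
  intro s (hs : 1 ≤ s) t (ht : 1 ≤ t) hst
  set u := Real.log s + 1
  set v := Real.log t + 1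
  have hu : 1 ≤ u := by linarith [log_nonneg hs]
  have huv : u ≤ v := by linarith [log_le_log (by linarith) hst]
  have hu0 : 0 < u := by linarith
  have hratio : (v / u) ^ κ ≤ v / u := by
    simpa using rpow_le_rpow_of_exponent_le ((one_le_div hu0).2 huv) hκ
  have hcross : s * (v / u) ≤ t := by
    rw [← mul_div_assoc, div_le_iff₀ hu0]; exact mul_log_add_one_le hs hst
  unfold logWeight
  rw [rpow_neg hu0.le, rpow_neg (by linarith), ← div_eq_mul_inv, ← div_eq_mul_inv,
    div_le_div_iff₀ (rpow_pos_of_pos hu0 _) (rpow_pos_of_pos (by linarith) _)]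
  calc s * v ^ κ = s * (v / u) ^ κ * u ^ κ := by
        rw [div_rpow (by linarith) hu0.le, mul_assoc,
          div_mul_cancel₀ _ (rpow_pos_of_pos hu0 _).ne']
    _ ≤ s * (v / u) * u ^ κ := by gcongr
    _ ≤ t * u ^ κ := by gcongr

lemma log_add_one_rpow_neg_le {κ c d : ℝ} (hκ : 0 ≤ κ) (hc : 1 ≤ c) (hcd : c ≤ d) :
    (Real.log d + 1) ^ (-κ) ≤ (Real.log c + 1) ^ (-κ) :=
  rpow_le_rpow_of_nonpos (by linarith [log_nonneg hc])
    (by linarith [log_le_log (by linarith) hcd]) (neg_nonpos.2 hκ)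

lemma logWeight_add_le {κ a b : ℝ} (hκ : 0 ≤ κ) (ha : 1 ≤ a) (hb : 1 ≤ b) :
    logWeight κ (a + b) ≤ logWeight κ a + logWeight κ b := by
  unfold logWeight
  rw [add_mul]
  exact add_le_add
    (mul_le_mul_of_nonneg_left (log_add_one_rpow_neg_le hκ ha (by linarith)) (by linarith))
    (mul_le_mul_of_nonneg_left (log_add_one_rpow_neg_le hκ hb (by linarith)) (by linarith))

/-- Example 3.7: subadditivity of the weight η(s) = s (log s + 1)^{−κ} in the
Japanese-bracket variables, for large frequencies. -/
theorem stmt14 {n : ℕ} (κ : ℝ) (hκ0 : 0 < κ) (hκ1 : κ < 1) :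
    ∃ S : ℝ, 1 ≤ S ∧ ∀ ξ ζ : EuclideanSpace ℝ (Fin n), S ≤ jb ξ → S ≤ jb ζ →
      jb (ξ + ζ) * (Real.log (jb (ξ + ζ)) + 1) ^ (-κ)
        ≤ jb ξ * (Real.log (jb ξ) + 1) ^ (-κ)
          + jb ζ * (Real.log (jb ζ) + 1) ^ (-κ) := by
  refine ⟨1, le_rfl, fun ξ ζ hξ hζ => ?_⟩
  calc logWeight κ (jb (ξ + ζ)) ≤ logWeight κ (jb ξ + jb ζ) :=
        logWeight_monotoneOn hκ1.le (one_le_jb _) (show 1 ≤ jb ξ + jb ζ by linarith)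
          (jb_add_le ξ ζ)
    _ ≤ logWeight κ (jb ξ) + logWeight κ (jb ζ) := logWeight_add_le hκ0.le hξ hζ
end
end

section
/- Let μ be a modulus of continuity, let m ≥ 1, T > 0, L > 0, δ > 0, R > 0, and let a_0, …, a_{m−1} : [0, T] → ℝ satisfy |a_j(t) − a_j(s)| ≤ L μ(|t−s|) for all t, s ∈ [0, T] with |t−s| ≤ 1. Suppose that for every t ∈ [0, T] the monic polynomial X^m − Σ_{j=0}^{m−1} a_j(t) X^j has m real roots τ_1(t) < τ_2(t) < ⋯ < τ_m(t) with τ_{k+1}(t) − τ_k(t) ≥ δ for all k, and |τ_k(t)| ≤ R for all k, t. Then there exists a constant C > 0, depending only on m, δ, R and L, such that |τ_k(t) − τ_k(s)| ≤ C μ(|t−s|) for all k = 1, …, m and all t, s ∈ [0, T] with |t−s| ≤ 1. -/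
/-!
Write `P_t = X ^ m - ∑ j, a j t X ^ j`. For a root `x = τ k t` of `P_t`,
`P_s(x) = P_s(x) - P_t(x) = ∑ j, (a j t - a j s) x ^ j`, so `|∏ l, (x - τ l s)| ≤ M μ |t - s|`.
While this is below `(δ / 2) ^ m`, every root at time `t` is within `δ / 2` of some root at
time `s`; separation forces this matching to be `k ↦ k`, and the remaining `m - 1` factors are
at least `δ / 2`, so `|τ k t - τ k s| ≤ M μ |t - s| / (δ / 2) ^ (m - 1)`. Otherwise `μ |t - s|`
is bounded below and the trivial bound `2 R` suffices.
-/

noncomputable section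

open Real Set Filter MeasureTheory

open Polynomial

theorem Polynomial.eq_prod_X_sub_C_of_injective {R ι : Type*} [CommRing R] [IsDomain R]
    [Fintype ι] {p : R[X]} (hp : p.Monic) (hdeg : p.natDegree = Fintype.card ι) {r : ι → R}
    (hr : Function.Injective r) (hroot : ∀ i, p.IsRoot (r i)) :
    p = ∏ i, (X - C (r i)) := by
  have hprod : (∏ i, (X - C (r i))).Monic := monic_prod_X_sub_C r Finset.univ
  have hdeg' : (∏ i, (X - C (r i))).natDegree = Fintype.card ι := by simp
  refine eq_of_degree_le_of_eval_index_eq Finset.univ hr.injOn ?_ ?_ ?_ ?_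
  · rw [degree_eq_natDegree hp.ne_zero, hdeg, Finset.card_univ]
  · rw [degree_eq_natDegree hp.ne_zero, degree_eq_natDegree hprod.ne_zero, hdeg, hdeg']
  · rw [hp.leadingCoeff, hprod.leadingCoeff]
  · intro i _
    rw [(hroot i).eq_zero, eval_prod, Finset.prod_eq_zero (Finset.mem_univ i) (by simp)]

def monicWithCoeffs {R : Type*} [CommRing R] {m : ℕ} (c : Fin m → R) : R[X] :=
  X ^ m - ∑ j : Fin m, C (c j) * X ^ (j : ℕ)

section monicWithCoeffs

variable {R : Type*} [CommRing R] {m : ℕ} (c : Fin m → R)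

theorem monicWithCoeffs_monic : (monicWithCoeffs c).Monic :=
  monic_X_pow_sub (degree_sum_fin_lt c)

theorem natDegree_monicWithCoeffs [Nontrivial R] : (monicWithCoeffs c).natDegree = m :=
  natDegree_eq_of_degree_eq_some <| by
    rw [monicWithCoeffs, degree_sub_eq_left_of_degree_lt] <;> rw [degree_X_pow]
    exact degree_sum_fin_lt c

theorem eval_monicWithCoeffs (x : R) :
    (monicWithCoeffs c).eval x = x ^ m - ∑ j : Fin m, c j * x ^ (j : ℕ) := by
  simp [monicWithCoeffs, eval_finsetSum]

theorem pow_sub_sum_eq_prod_of_injective [IsDomain R] {r : Fin m → R}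
    (hr : Function.Injective r) (hroot : ∀ k, r k ^ m - ∑ j : Fin m, c j * r k ^ (j : ℕ) = 0)
    (x : R) : x ^ m - ∑ j : Fin m, c j * x ^ (j : ℕ) = ∏ k, (x - r k) := by
  have hfac := eq_prod_X_sub_C_of_injective (monicWithCoeffs_monic c)
    (by rw [natDegree_monicWithCoeffs, Fintype.card_fin]) hr
    (fun k => by rw [IsRoot.def, eval_monicWithCoeffs, hroot k])
  simpa [eval_monicWithCoeffs, eval_prod] using congrArg (eval x) hfac

end monicWithCoeffs

theorem abs_pow_sub_sum_le_of_pow_sub_sum_eq_zero {m : ℕ} {c c' : Fin m → ℝ} {x B ε : ℝ}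
    (hx : x ^ m - ∑ j : Fin m, c j * x ^ (j : ℕ) = 0) (hB : 1 ≤ B) (hxB : |x| ≤ B)
    (hc : ∀ j, |c j - c' j| ≤ ε) :
    |x ^ m - ∑ j : Fin m, c' j * x ^ (j : ℕ)| ≤ m * ε * B ^ m := by
  have hdiff : x ^ m - ∑ j : Fin m, c' j * x ^ (j : ℕ)
      = ∑ j : Fin m, (c j - c' j) * x ^ (j : ℕ) := by
    rw [sub_eq_zero.1 hx, ← Finset.sum_sub_distrib]
    simp only [sub_mul]
  calc |x ^ m - ∑ j : Fin m, c' j * x ^ (j : ℕ)|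
      ≤ ∑ j : Fin m, |c j - c' j| * |x| ^ (j : ℕ) := by
        rw [hdiff]
        refine (Finset.abs_sum_le_sum_abs _ _).trans_eq ?_
        simp only [abs_mul, abs_pow]
    _ ≤ ∑ _j : Fin m, ε * B ^ m := by
        gcongr with j
        · exact (abs_nonneg _).trans (hc j)
        · exact hc j
        · exact (pow_le_pow_left₀ (abs_nonneg x) hxB _).trans
            (pow_le_pow_right₀ hB j.isLt.le)
    _ = m * ε * B ^ m := by simp [mul_assoc]

theorem exists_abs_sub_lt_of_abs_prod_lt {ι : Type*} [Fintype ι] {r : ι → ℝ} {x η : ℝ}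
    (hη : 0 ≤ η) (h : |∏ i, (x - r i)| < η ^ Fintype.card ι) : ∃ i, |x - r i| < η := by
  by_contra! hfar
  rw [Finset.abs_prod] at h
  refine h.not_ge ?_
  calc η ^ Fintype.card ι = ∏ _i : ι, η := by simp
    _ ≤ ∏ i, |x - r i| := Finset.prod_le_prod (fun _ _ => hη) (fun i _ => hfar i)

def SeparatedBy {m : ℕ} (δ : ℝ) (r : Fin m → ℝ) : Prop :=
  ∀ ⦃k l : Fin m⦄, k < l → r k + δ ≤ r l

namespace SeparatedBy

variable {m : ℕ} {δ : ℝ} {r r' : Fin m → ℝ}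

theorem of_succ (hr : Monotone r) (hsucc : ∀ k : Fin m, ∀ hk : (k : ℕ) + 1 < m,
    δ ≤ r ⟨(k : ℕ) + 1, hk⟩ - r k) : SeparatedBy δ r := by
  intro k l hkl
  have hk : (k : ℕ) + 1 < m := lt_of_le_of_lt hkl l.isLt
  have : r ⟨(k : ℕ) + 1, hk⟩ ≤ r l := hr (Fin.mk_le_of_le_val hkl)
  linarith [hsucc k hk]

theorem le_abs_sub (hr : SeparatedBy δ r) {k l : Fin m} (hkl : k ≠ l) : δ ≤ |r k - r l| := by
  rcases hkl.lt_or_gt with h | h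
  · rw [abs_sub_comm]; exact le_abs.2 (Or.inl (by linarith [hr h]))
  · exact le_abs.2 (Or.inl (by linarith [hr h]))

theorem mul_pow_le_abs_prod (hr : SeparatedBy δ r) {x : ℝ} {k : Fin m}
    (hx : |x - r k| < δ / 2) : |x - r k| * (δ / 2) ^ (m - 1) ≤ |∏ l, (x - r l)| := by
  have hδ : 0 ≤ δ / 2 := (abs_nonneg _).trans hx.le
  have hfar : ∀ l ∈ Finset.univ.erase k, δ / 2 ≤ |x - r l| := fun l hl => by
    linarith [hr.le_abs_sub (Finset.ne_of_mem_erase hl).symm, abs_sub_le (r k) x (r l),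
      abs_sub_comm (r k) x]
  rw [Finset.abs_prod, ← Finset.mul_prod_erase Finset.univ _ (Finset.mem_univ k)]
  gcongr
  calc (δ / 2) ^ (m - 1) = ∏ _l ∈ Finset.univ.erase k, δ / 2 := by
        rw [Finset.prod_const, Finset.card_erase_of_mem (Finset.mem_univ k), Finset.card_fin]
    _ ≤ ∏ l ∈ Finset.univ.erase k, |x - r l| := Finset.prod_le_prod (fun _ _ => hδ) hfar

-- The matching `σ` is strictly monotone because both families are `δ`-separated, so `σ = id`.
theorem abs_sub_lt_of_forall_exists (hr : SeparatedBy δ r) (hr' : SeparatedBy δ r')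
    (h : ∀ k, ∃ l, |r k - r' l| < δ / 2) (k : Fin m) : |r k - r' k| < δ / 2 := by
  choose σ hσ using h
  have hσ_mono : StrictMono σ := by
    intro k l hkl
    by_contra! hle
    have hk := abs_lt.1 (hσ k)
    have hl := abs_lt.1 (hσ l)
    have hrkl := hr hkl
    rcases hle.eq_or_lt with heq | hlt
    · rw [heq] at hl
      linarith
    · linarith [hr' hlt]
  simpa [hσ_mono.apply_eq] using hσ k

theorem abs_sub_le_of_abs_prod_le (hr : SeparatedBy δ r) (hr' : SeparatedBy δ r') (hδ : 0 < δ)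
    {E : ℝ} (hprod : ∀ k, |∏ l, (r k - r' l)| ≤ E) (hE : E < (δ / 2) ^ m) (k : Fin m) :
    |r k - r' k| ≤ E / (δ / 2) ^ (m - 1) := by
  have hclose : ∀ k, ∃ l, |r k - r' l| < δ / 2 := fun k =>
    exists_abs_sub_lt_of_abs_prod_lt (by positivity)
      (by simpa using (hprod k).trans_lt hE)
  rw [le_div_iff₀ (by positivity)]
  exact (hr'.mul_pow_le_abs_prod (hr.abs_sub_lt_of_forall_exists hr' hclose k)).trans (hprod k)

end SeparatedBy

theorem stmt17_general (μ : ℝ → ℝ)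
    (hμmap : ∀ s ∈ Set.Icc (0:ℝ) 1, μ s ∈ Set.Icc (0:ℝ) 1)
    (m : ℕ) (hm : 1 ≤ m) (T L δ R : ℝ) (hL : 0 < L)
    (hδ : 0 < δ) (hR : 0 < R)
    (a : Fin m → ℝ → ℝ)
    (ha : ∀ j : Fin m, ∀ t ∈ Set.Icc (0:ℝ) T, ∀ s ∈ Set.Icc (0:ℝ) T, |t - s| ≤ 1 →
      |a j t - a j s| ≤ L * μ |t - s|)
    (τ : Fin m → ℝ → ℝ)
    (hroot : ∀ t ∈ Set.Icc (0:ℝ) T, ∀ k : Fin m,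
      (τ k t) ^ m - ∑ j : Fin m, a j t * (τ k t) ^ (j : ℕ) = 0)
    (horder : ∀ t ∈ Set.Icc (0:ℝ) T, ∀ k l : Fin m, k < l → τ k t < τ l t)
    (hsep : ∀ t ∈ Set.Icc (0:ℝ) T, ∀ k : Fin m, ∀ hk : (k : ℕ) + 1 < m,
      δ ≤ τ ⟨(k : ℕ) + 1, hk⟩ t - τ k t)
    (hbd : ∀ t ∈ Set.Icc (0:ℝ) T, ∀ k : Fin m, |τ k t| ≤ R) :
    ∃ C > 0, ∀ k : Fin m, ∀ t ∈ Set.Icc (0:ℝ) T, ∀ s ∈ Set.Icc (0:ℝ) T,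
      |t - s| ≤ 1 → |τ k t - τ k s| ≤ C * μ |t - s| := by
  set B := max R 1
  set M := m * L * B ^ m
  have hM : 0 < M := by
    have : (0 : ℝ) < m := by exact_mod_cast hm
    positivity
  refine ⟨max (M / (δ / 2) ^ (m - 1)) (2 * R * M / (δ / 2) ^ m), by positivity, ?_⟩
  intro k t ht s hs hts
  have hμ : 0 ≤ μ |t - s| := (hμmap _ ⟨abs_nonneg _, hts⟩).1
  have hsepd : ∀ u ∈ Icc 0 T, SeparatedBy δ (τ · u) := fun u hu =>
    .of_succ (StrictMono.monotone fun k l => horder u hu k l) (hsep u hu)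
  have hprod : ∀ k', |∏ l, (τ k' t - τ l s)| ≤ M * μ |t - s| := fun k' => by
    rw [← pow_sub_sum_eq_prod_of_injective _ (StrictMono.injective fun k l => horder s hs k l)
      (hroot s hs)]
    refine (abs_pow_sub_sum_le_of_pow_sub_sum_eq_zero (hroot t ht k') (le_max_right R 1)
      ((hbd t ht k').trans (le_max_left R 1)) (fun j => ha j t ht s hs hts)).trans_eq ?_
    ring
  rcases lt_or_ge (M * μ |t - s|) ((δ / 2) ^ m) with hsmall | hlarge
  · calc |τ k t - τ k s| ≤ M * μ |t - s| / (δ / 2) ^ (m - 1) :=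
          (hsepd t ht).abs_sub_le_of_abs_prod_le (hsepd s hs) hδ hprod hsmall k
      _ = M / (δ / 2) ^ (m - 1) * μ |t - s| := by ring
      _ ≤ _ := by gcongr; exact le_max_left _ _
  · calc |τ k t - τ k s| ≤ 2 * R := by
          linarith [abs_sub (τ k t) (τ k s), hbd t ht k, hbd s hs k]
      _ ≤ 2 * R * (M * μ |t - s| / (δ / 2) ^ m) :=
          le_mul_of_one_le_right (by positivity) ((one_le_div (by positivity)).2 hlarge)
      _ = 2 * R * M / (δ / 2) ^ m * μ |t - s| := by ring
      _ ≤ _ := by gcongr; exact le_max_right _ _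

/-- μ-continuity of the simple, well-separated, bounded real roots of a monic polynomial
whose coefficients are μ-continuous in time. -/
theorem stmt17 (μ : ℝ → ℝ)
    (hμcont : ContinuousOn μ (Set.Icc 0 1))
    (hμconc : ConcaveOn ℝ (Set.Icc 0 1) μ)
    (hμmono : MonotoneOn μ (Set.Icc 0 1))
    (hμ0 : μ 0 = 0)
    (hμmap : ∀ s ∈ Set.Icc (0:ℝ) 1, μ s ∈ Set.Icc (0:ℝ) 1)
    (m : ℕ) (hm : 1 ≤ m) (T L δ R : ℝ) (hT : 0 < T) (hL : 0 < L)
    (hδ : 0 < δ) (hR : 0 < R)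
    (a : Fin m → ℝ → ℝ)
    (ha : ∀ j : Fin m, ∀ t ∈ Set.Icc (0:ℝ) T, ∀ s ∈ Set.Icc (0:ℝ) T, |t - s| ≤ 1 →
      |a j t - a j s| ≤ L * μ |t - s|)
    (τ : Fin m → ℝ → ℝ)
    (hroot : ∀ t ∈ Set.Icc (0:ℝ) T, ∀ k : Fin m,
      (τ k t) ^ m - ∑ j : Fin m, a j t * (τ k t) ^ (j : ℕ) = 0)
    (horder : ∀ t ∈ Set.Icc (0:ℝ) T, ∀ k l : Fin m, k < l → τ k t < τ l t)
    (hsep : ∀ t ∈ Set.Icc (0:ℝ) T, ∀ k : Fin m, ∀ hk : (k : ℕ) + 1 < m,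
      δ ≤ τ ⟨(k : ℕ) + 1, hk⟩ t - τ k t)
    (hbd : ∀ t ∈ Set.Icc (0:ℝ) T, ∀ k : Fin m, |τ k t| ≤ R) :
    ∃ C > 0, ∀ k : Fin m, ∀ t ∈ Set.Icc (0:ℝ) T, ∀ s ∈ Set.Icc (0:ℝ) T,
      |t - s| ≤ 1 → |τ k t - τ k s| ≤ C * μ |t - s| :=
  stmt17_general μ hμmap m hm T L δ R hL hδ hR a ha τ hroot horder hsep hbd
end
end
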